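/- arXiv:1309.1738 — 9 statements merged into one kernel-verified Lean document; each statement's English description precedes it below -/
import Mathlib

section
/- For any subset F of the symmetric n×n real matrices, if F satisfies positivity (F + P ⊆ F where P is the cone of positive semidefinite matrices), then its Dirichlet dual F̃ = -(complement of interior of F) also satisfies positivity (F̃ + P ⊆ F̃). -/
open Pointwise

/-- The space of symmetric (self-adjoint) real `n × n` matrices. -/
abbrev SymSpace (n : ℕ) : Type := selfAdjoint (Matrix (Fin n) (Fin n) ℝ)

/-- The cone `P` of positive semidefinite symmetric matrices. -/
def PSDcone (n : ℕ) : Set (SymSpace n) :=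
  {A | (A : Matrix (Fin n) (Fin n) ℝ).PosSemidef}

/-- The Dirichlet dual `F̃ = Sym(n) \ (-interior F)`. -/
def dirDual {n : ℕ} (F : Set (SymSpace n)) : Set (SymSpace n) :=
  {A | -A ∉ interior F}

/-- If `F` satisfies positivity `F + P ⊆ F`, then so does its Dirichlet dual. -/
theorem dual_positivity (n : ℕ) (F : Set (SymSpace n)) (hP : F + PSDcone n ⊆ F) :
    dirDual F + PSDcone n ⊆ dirDual F := by
  rintro x ⟨a, ha, b, hb, rfl⟩
  intro h
  apply ha
  have hopen : IsOpen ((· + b) '' interior F) :=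
    (Homeomorph.addRight b).isOpenMap _ isOpen_interior
  have hsub : (· + b) '' interior F ⊆ F := by
    rintro _ ⟨y, hy, rfl⟩
    exact hP ⟨y, interior_subset hy, b, hb, rfl⟩
  have key : (· + b) '' interior F ⊆ interior F :=
    interior_maximal hsub hopen
  have : -a = (-(a + b)) + b := by abel
  rw [this]
  exact key ⟨-(a + b), h, rfl⟩
end

section
/- If F ⊆ Sym(n) is a closed set satisfying positivity (F + P ⊆ F), then F equals the closure of its interior, and the double Dirichlet dual of F equals F (i.e., F̃̃ = F). -/
open Pointwise

/-!
A symmetric matrix whose diagonal dominates its off-diagonal rows is positive semidefinite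
(Gershgorin), so `t • 1` lies in the interior of `P` for `t > 0` and `0 ∈ closure (interior P)`.
Positivity then gives `F + interior P ⊆ interior F`, hence every `A ∈ F` is a limit of points
`A + t • 1` of `interior F`, i.e. `F = closure (interior F)`. Since negation is a homeomorphism,
`interior F̃ = -(closure (interior F))ᶜ`, so `F̃̃ = closure (interior F)`.
-/

open Finset in
open scoped ComplexOrder in
theorem Matrix.IsHermitian.posSemidef_of_sum_row_le_diag {𝕜 n : Type*} [RCLike 𝕜] [Fintype n]
    [DecidableEq n] {A : Matrix n n 𝕜} (hA : A.IsHermitian)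
    (hdom : ∀ k, ∑ j ∈ univ.erase k, ‖A k j‖ ≤ RCLike.re (A k k)) : A.PosSemidef := by
  refine hA.posSemidef_iff_eigenvalues_nonneg.mpr fun i => show (0 : ℝ) ≤ _ from ?_
  have hμ : Module.End.HasEigenvalue A.toLin' (hA.eigenvalues i : 𝕜) := by
    rw [Module.End.hasEigenvalue_iff_mem_spectrum, Matrix.spectrum_toLin']
    exact spectrum.algebraMap_mem 𝕜 (hA.eigenvalues_mem_spectrum_real i)
  obtain ⟨k, hk⟩ := eigenvalue_mem_ball hμ
  rw [Metric.mem_closedBall, dist_comm, dist_eq_norm] at hk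
  have hre : RCLike.re (A k k) - hA.eigenvalues i ≤ ‖A k k - hA.eigenvalues i‖ := by
    simpa using RCLike.re_le_norm (A k k - hA.eigenvalues i)
  linarith [hdom k]

theorem smul_one_mem_interior_PSDcone (n : ℕ) {t : ℝ} (ht : 0 < t) :
    t • (1 : SymSpace n) ∈ interior (PSDcone n) := by
  let U : Set (SymSpace n) :=
    {M | ∀ k, ∑ j ∈ Finset.univ.erase k, |(M : Matrix (Fin n) (Fin n) ℝ) k j| <
      (M : Matrix (Fin n) (Fin n) ℝ) k k}
  have hU : IsOpen U := by
    have hentry (k j : Fin n) :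
        Continuous fun M : SymSpace n => (M : Matrix (Fin n) (Fin n) ℝ) k j :=
      continuous_subtype_val.matrix_elem k j
    simp only [U, Set.ofPred_forall]
    exact isOpen_iInter_of_finite fun k =>
      isOpen_lt (continuous_finsetSum _ fun j _ => (hentry k j).abs) (hentry k k)
  refine mem_interior.mpr ⟨U, fun M hM => ?_, hU, fun k => ?_⟩
  · exact M.2.isHermitian.posSemidef_of_sum_row_le_diag fun k => (hM k).le
  · have hoff : ∀ j ∈ Finset.univ.erase k,
        |((t • (1 : SymSpace n) : SymSpace n) : Matrix (Fin n) (Fin n) ℝ) k j| = 0 :=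
      fun j hj => by
        simp [selfAdjoint.val_smul, selfAdjoint.val_one,
          Matrix.one_apply_ne' (Finset.ne_of_mem_erase hj)]
    rw [Finset.sum_eq_zero hoff]
    simpa [selfAdjoint.val_smul, selfAdjoint.val_one] using ht

section TopologicalAddGroup

variable {G : Type*} [AddGroup G] [TopologicalSpace G] [IsTopologicalAddGroup G]

theorem add_interior_subset_interior_of_add_subset {F P : Set G} (h : F + P ⊆ F) :
    F + interior P ⊆ interior F :=
  interior_maximal ((Set.add_subset_add_left interior_subset).trans h) isOpen_interior.add_left

theorem subset_closure_add_of_zero_mem_closure {s t : Set G} (ht : (0 : G) ∈ closure t) :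
    s ⊆ closure (s + t) := fun a ha => by
  simpa using map_mem_closure (continuous_const_add a) ht fun _ hb => Set.add_mem_add ha hb

theorem closure_interior_eq_of_add_subset {F P : Set G} (hF : IsClosed F) (hFP : F + P ⊆ F)
    (hP : (0 : G) ∈ closure (interior P)) : closure (interior F) = F :=
  (closure_minimal interior_subset hF).antisymm <| (subset_closure_add_of_zero_mem_closure hP).trans
    (closure_mono (add_interior_subset_interior_of_add_subset hFP))

end TopologicalAddGroup

open Filter Topology in
theorem zero_mem_closure_interior_PSDcone (n : ℕ) :
    (0 : SymSpace n) ∈ closure (interior (PSDcone n)) := by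
  have hcont : Continuous fun t : ℝ => t • (1 : SymSpace n) :=
    continuous_induced_rng.2 <| by
      simp only [Function.comp_def, selfAdjoint.val_smul, selfAdjoint.val_one]
      fun_prop
  have hlim : Tendsto (fun t : ℝ => t • (1 : SymSpace n)) (𝓝[>] 0) (𝓝 0) :=
    (hcont.tendsto' 0 0 (zero_smul ℝ _)).mono_left nhdsWithin_le_nhds
  exact mem_closure_of_tendsto hlim
    (eventually_nhdsWithin_of_forall fun _ ht => smul_one_mem_interior_PSDcone n ht)

theorem dirDual_dirDual {n : ℕ} (F : Set (SymSpace n)) :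
    dirDual (dirDual F) = closure (interior F) := by
  have hneg (s : Set (SymSpace n)) : interior (-s) = -interior s :=
    ((Homeomorph.neg _).preimage_interior s).symm
  ext A
  change -A ∉ interior (-(interior F)ᶜ) ↔ _
  rw [hneg, interior_compl]
  simp

/-- A subequation (closed set satisfying positivity) equals the closure of its interior,
and is reflexive under the Dirichlet duality. -/
theorem dual_dual_eq_self (n : ℕ) (F : Set (SymSpace n)) (hFc : IsClosed F)
    (hFp : F + PSDcone n ⊆ F) :
    F = closure (interior F) ∧ dirDual (dirDual F) = F := by
  have hF := closure_interior_eq_of_add_subset hFc hFp (zero_mem_closure_interior_PSDcone n)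
  exact ⟨hF.symm, (dirDual_dirDual F).trans hF⟩
end

section
/- If an upper semi-continuous function u: X → ℝ ∪ {−∞} on an open set X ⊆ ℝⁿ fails the strong maximum principle on a compact set K ⊆ X with connected interior (i.e., u attains its maximum M = sup_K u at an interior point but is not constant), then there exists a closed ball B̄_r(x₀) ⊆ int K with u(x) < M for all x in the open ball B_r(x₀) and u(x̄) = M for some x̄ on the boundary sphere ∂B_r(x₀). -/
open Metric Topology Filter

/-- If an upper semi-continuous function on a compact set `K` with connected interior attains
its maximum `M` at an interior point but is not constant, then there is a closed ball contained
in `int K` on whose open part `u < M` while `u = M` somewhere on the bounding sphere. -/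
theorem smp_failure_ball (n : ℕ) (X K : Set (EuclideanSpace ℝ (Fin n)))
    (u : EuclideanSpace ℝ (Fin n) → EReal)
    (hX : IsOpen X) (hK : IsCompact K) (hKX : K ⊆ X)
    (hconn : IsConnected (interior K))
    (husc : UpperSemicontinuousOn u K)
    (M : EReal) (hM : M = ⨆ x ∈ K, u x)
    (hattain : ∃ x ∈ interior K, u x = M)
    (hnotconst : ∃ x ∈ interior K, u x ≠ M) :
    ∃ (x₀ : EuclideanSpace ℝ (Fin n)) (r : ℝ), 0 < r ∧
      closedBall x₀ r ⊆ interior K ∧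
      (∀ x ∈ ball x₀ r, u x < M) ∧
      ∃ x' ∈ sphere x₀ r, u x' = M := by
  set I := interior K with hI
  have hIopen : IsOpen I := isOpen_interior
  have hIK : I ⊆ K := interior_subset
  set E : Set (EuclideanSpace ℝ (Fin n)) := {x | x ∈ I ∧ u x = M} with hE
  set F : Set (EuclideanSpace ℝ (Fin n)) := {x | x ∈ I ∧ u x ≠ M} with hF
  have hle : ∀ x ∈ K, u x ≤ M := by
    intro x hx
    rw [hM]
    exact le_iSup₂ (f := fun x (_ : x ∈ K) => u x) x hx
  have hlt : ∀ x ∈ I, u x ≠ M → u x < M := fun x hx hne =>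
    lt_of_le_of_ne (hle x (hIK hx)) hne
  -- F is open
  have hFopen : IsOpen F := by
    rw [isOpen_iff_mem_nhds]
    rintro x ⟨hxI, hxne⟩
    have hxlt : u x < M := hlt x hxI hxne
    have hnhds : 𝓝[K] x = 𝓝 x :=
      nhdsWithin_eq_nhds.2 (Filter.mem_of_superset (hIopen.mem_nhds hxI) hIK)
    have h1 : ∀ᶠ z in 𝓝 x, u z < M := by
      have := husc x (hIK hxI) M hxlt
      rwa [hnhds] at this
    have h2 : ∀ᶠ z in 𝓝 x, z ∈ I := hIopen.mem_nhds hxI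
    filter_upwards [h1, h2] with z hz1 hz2
    exact ⟨hz2, hz1.ne⟩
  -- E meets the closure of F
  obtain ⟨a, haI, haM⟩ := hattain
  obtain ⟨b, hbI, hbM⟩ := hnotconst
  have hcl : ∃ e ∈ E, e ∈ closure F := by
    by_contra h
    push_neg at h
    have hEopen : IsOpen E := by
      have heq : E = I ∩ (closure F)ᶜ := by
        ext x
        constructor
        · rintro ⟨hxI, hxM⟩; exact ⟨hxI, h x ⟨hxI, hxM⟩⟩
        · rintro ⟨hxI, hxF⟩
          refine ⟨hxI, ?_⟩
          by_contra hne
          exact hxF (subset_closure ⟨hxI, hne⟩)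
      rw [heq]
      exact hIopen.inter isClosed_closure.isOpen_compl
    have hsub : I ⊆ E ∪ F := by
      intro x hx
      by_cases hxM : u x = M
      · exact Or.inl ⟨hx, hxM⟩
      · exact Or.inr ⟨hx, hxM⟩
    have := hconn.isPreconnected E F hEopen hFopen hsub
      ⟨a, haI, haI, haM⟩ ⟨b, hbI, hbI, hbM⟩
    obtain ⟨x, _, ⟨_, hx1⟩, ⟨_, hx2⟩⟩ := this
    exact hx2 hx1
  obtain ⟨e, heE, heF⟩ := hcl
  obtain ⟨ρ, hρ0, hρI⟩ := Metric.isOpen_iff.1 hIopen e heE.1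
  obtain ⟨y, hyF, hye⟩ := Metric.mem_closure_iff.1 heF (ρ / 4) (by linarith)
  -- dist e y < ρ/4
  set S : Set (EuclideanSpace ℝ (Fin n)) := E ∩ closedBall y (ρ / 2) with hS
  have hSK : closedBall y (ρ / 2) ⊆ I := by
    intro x hx
    apply hρI
    rw [mem_ball]
    calc dist x e ≤ dist x y + dist y e := dist_triangle x y e
    _ ≤ ρ / 2 + ρ / 4 := by
        have := mem_closedBall.1 hx
        rw [dist_comm y e] at *
        linarith
    _ < ρ := by linarith
  have hSclosed : IsClosed S := by
    apply isClosed_of_closure_subset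
    intro x hx
    have hxball : x ∈ closedBall y (ρ / 2) := by
      have := closure_mono (Set.inter_subset_right (s := E)) hx
      rwa [closure_closedBall] at this
    have hxI : x ∈ I := hSK hxball
    have hxnF : x ∉ F := by
      intro hxF
      obtain ⟨z, hzF, hzE, -⟩ := _root_.mem_closure_iff.1 hx F hFopen hxF
      exact hzF.2 hzE.2
    have hxM : u x = M := by
      by_contra hne
      exact hxnF ⟨hxI, hne⟩
    exact ⟨⟨hxI, hxM⟩, hxball⟩
  have hScompact : IsCompact S :=
    (isCompact_closedBall y (ρ / 2)).of_isClosed_subset hSclosed Set.inter_subset_right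
  have hSne : S.Nonempty := ⟨e, heE, by
    rw [mem_closedBall]
    linarith [dist_comm e y]⟩
  have hyS : y ∉ S := fun h => hyF.2 h.1.2
  set r : ℝ := infDist y S with hr
  have hr0 : 0 < r := (hSclosed.notMem_iff_infDist_pos hSne).1 hyS
  have hrle : r < ρ / 4 := by
    calc r ≤ dist y e := infDist_le_dist_of_mem ⟨heE, by rw [mem_closedBall]; linarith [dist_comm e y]⟩
    _ < ρ / 4 := by rw [dist_comm]; exact hye
  have hcbI : closedBall y r ⊆ I := by
    intro x hx
    apply hSK
    rw [mem_closedBall] at *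
    linarith
  obtain ⟨x', hx'S, hx'd⟩ := hScompact.exists_infDist_eq_dist hSne y
  refine ⟨y, r, hr0, hcbI, ?_, x', ?_, hx'S.1.2⟩
  · intro x hxball
    have hxI : x ∈ I := hcbI (ball_subset_closedBall hxball)
    rcases eq_or_ne (u x) M with hxM | hxM
    · exfalso
      have hxS : x ∈ S := ⟨⟨hxI, hxM⟩, by
        rw [mem_closedBall]
        have := mem_ball.1 hxball
        linarith⟩
      have : infDist y S ≤ dist y x := infDist_le_dist_of_mem hxS
      rw [dist_comm] at this
      have h2 := mem_ball.1 hxball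
      simp only [← hr] at this
      linarith
    · exact hlt x hxI hxM
  · rw [mem_sphere, dist_comm]
    exact hx'd.symm
end

section
/- Let f: [0,∞) → [0,∞] be upper semi-continuous with f(0) = 0 and f(y) > 0 for y > 0, and suppose ∫₀⁺ dy/f(y) = ∞. Let φ: [r₁, r₀] → [0,∞) be absolutely continuous with φ(t) ≥ 0, φ(t) = 0 for t in a neighborhood of r₀ within [r₁,r₀], φ(s₁) > 0 for some s₁ ∈ (r₁, r₀), and φ'(t) + f(φ(t)) ≥ 0 almost everywhere. Then no such φ exists; i.e., these conditions are contradictory. -/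
/-!
Let `c = φ s₁ > 0` and, for `0 ≤ y ≤ c`, let `τ y` be the last time in `[s₁, r₀]` at which
`φ = y`. Since `φ r₀ = 0`, the intermediate value theorem makes `τ` decreasing, so `τ` is
differentiable a.e. and `∫₀ᶜ |τ'| < ∞`. Differentiating `φ (τ y) = y` gives `φ'(τ y) τ'(y) = 1`;
as `τ' ≤ 0`, the inequality `-φ' ≤ f ∘ φ` then yields `1 / f y ≤ -τ' y`, hence
`∫₀ᶜ dy / f(y) < ∞`.

The chain rule is only available at those `y` for which `τ y` avoids the null set of times where
`φ` is not differentiable with derivative `g` or the differential inequality fails. This is where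
absolute continuity enters: `φ` maps null sets to null sets, because `|φ y - φ x| ≤ ∫ₓʸ |g|`
bounds the Lebesgue measure of `φ '' s` by the Stieltjes measure of `∫ |g|`, which has
density `|g|`.
-/

open MeasureTheory Set Filter Topology
open scoped ENNReal

theorem StieltjesFunction.volume_image_le_measure (F : StieltjesFunction ℝ) {ψ : ℝ → ℝ}
    {s : Set ℝ} (hψ : ∀ x ∈ s, ∀ y ∈ s, x ≤ y → dist (ψ x) (ψ y) ≤ F y - F x) :
    volume (ψ '' s) ≤ F.measure s := by
  have hle : (OuterMeasure.comap ψ volume.toOuterMeasure).restrict s ≤ F.outer := by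
    refine OuterMeasure.le_ofFunction.2 fun t => ?_
    rw [OuterMeasure.restrict_apply, OuterMeasure.comap_apply, F.length_eq]
    refine le_iInf₂ fun a b => le_iInf fun hab => ?_
    refine (Real.volume_le_diam _).trans <| Metric.ediam_le ?_
    have hpair : ∀ x ∈ t ∩ s, ∀ y ∈ t ∩ s, x ≤ y →
        edist (ψ x) (ψ y) ≤ ENNReal.ofReal (F b - F a) := by
      intro x hx y hy hxy
      have hxI : x ∈ Ioc a b := hab ⟨hx.1, not_isBot x⟩
      have hyI : y ∈ Ioc a b := hab ⟨hy.1, not_isBot y⟩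
      rw [edist_dist]
      gcongr
      calc dist (ψ x) (ψ y) ≤ F y - F x := hψ x hx.2 y hy.2 hxy
        _ ≤ F b - F a := sub_le_sub (F.mono hyI.2) (F.mono hxI.1.le)
    rintro _ ⟨x, hx, rfl⟩ _ ⟨y, hy, rfl⟩
    rcases le_total x y with hxy | hyx
    · exact hpair x hx y hy hxy
    · rw [edist_comm]; exact hpair y hy x hx hyx
  calc volume (ψ '' s) = (OuterMeasure.comap ψ volume.toOuterMeasure).restrict s s := by
        rw [OuterMeasure.restrict_apply, OuterMeasure.comap_apply, inter_self]; rfl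
    _ ≤ F.outer s := hle s
    _ = F.measure s := by rw [StieltjesFunction.measure_def]; rfl

noncomputable def StieltjesFunction.primitiveNorm {g : ℝ → ℝ} (hg : Integrable g) :
    StieltjesFunction ℝ where
  toFun x := ∫ t in 0..x, ‖g t‖
  mono' x y hxy := by
    have hsub := intervalIntegral.integral_interval_sub_left (a := 0) (b := y) (c := x)
      hg.norm.intervalIntegrable hg.norm.intervalIntegrable
    exact sub_nonneg.1 (hsub ▸ intervalIntegral.integral_nonneg hxy fun _ _ => norm_nonneg _)
  right_continuous' x := (hg.norm.continuous_primitive 0).continuousWithinAt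

theorem StieltjesFunction.primitiveNorm_sub {g : ℝ → ℝ} (hg : Integrable g) (x y : ℝ) :
    primitiveNorm hg y - primitiveNorm hg x = ∫ t in x..y, ‖g t‖ :=
  intervalIntegral.integral_interval_sub_left hg.norm.intervalIntegrable
    hg.norm.intervalIntegrable

theorem StieltjesFunction.measure_primitiveNorm {g : ℝ → ℝ} (hg : Integrable g) :
    (primitiveNorm hg).measure = volume.withDensity fun t => ‖g t‖ₑ := by
  refine Measure.ext_of_Ioc _ _ fun a b hab => ?_
  rw [measure_Ioc, primitiveNorm_sub, intervalIntegral.integral_of_le hab.le,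
    withDensity_apply _ measurableSet_Ioc,
    ofReal_integral_norm_eq_lintegral_enorm hg.integrableOn]

theorem volume_image_le_setLIntegral_enorm {g ψ : ℝ → ℝ} (hg : Integrable g) {s : Set ℝ}
    (hψ : ∀ x ∈ s, ∀ y ∈ s, x ≤ y → dist (ψ x) (ψ y) ≤ ∫ t in x..y, ‖g t‖) :
    volume (ψ '' s) ≤ ∫⁻ t in s, ‖g t‖ₑ := by
  rw [← withDensity_apply' _ s, ← StieltjesFunction.measure_primitiveNorm hg]
  refine StieltjesFunction.volume_image_le_measure _ fun x hx y hy hxy => ?_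
  rw [StieltjesFunction.primitiveNorm_sub]
  exact hψ x hx y hy hxy

section PrimitiveRepresentation

variable {φ g : ℝ → ℝ} {a b : ℝ}

theorem continuousOn_of_eq_add_integral (hg : IntervalIntegrable g volume a b)
    (hφ : ∀ t ∈ Icc a b, φ t = φ a + ∫ s in a..t, g s) : ContinuousOn φ (Icc a b) := by
  have hprim := intervalIntegral.continuousOn_primitive_interval' hg left_mem_uIcc
  exact (continuousOn_const.add (hprim.mono Icc_subset_uIcc)).congr hφ

theorem dist_le_integral_norm_of_eq_add_integral (hg : IntervalIntegrable g volume a b)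
    (hφ : ∀ t ∈ Icc a b, φ t = φ a + ∫ s in a..t, g s) {x y : ℝ} (hx : x ∈ Icc a b)
    (hy : y ∈ Icc a b) (hxy : x ≤ y) : dist (φ x) (φ y) ≤ ∫ t in x..y, ‖g t‖ := by
  have hint : ∀ t ∈ Icc a b, IntervalIntegrable g volume a t := fun t ht =>
    hg.mono_set (uIcc_subset_uIcc left_mem_uIcc (Icc_subset_uIcc ht))
  have hdiff : φ y - φ x = ∫ t in x..y, g t := by
    rw [hφ y hy, hφ x hx, add_sub_add_left_eq_sub,
      intervalIntegral.integral_interval_sub_left (hint y hy) (hint x hx)]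
  rw [dist_comm, dist_eq_norm, hdiff]
  exact intervalIntegral.norm_integral_le_integral_norm hxy

theorem volume_image_eq_zero_of_eq_add_integral (hg : IntervalIntegrable g volume a b)
    (hφ : ∀ t ∈ Icc a b, φ t = φ a + ∫ s in a..t, g s) {s : Set ℝ} (hs : s ⊆ Icc a b)
    (hs₀ : volume s = 0) : volume (φ '' s) = 0 := by
  have hgI : IntegrableOn g (Icc a b) := by
    rw [intervalIntegrable_iff'] at hg
    exact hg.mono_set Icc_subset_uIcc
  refine le_antisymm ?_ zero_le
  calc volume (φ '' s) ≤ ∫⁻ t in s, ‖(Icc a b).indicator g t‖ₑ := by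
        refine volume_image_le_setLIntegral_enorm (hgI.integrable_indicator measurableSet_Icc)
          fun x hx y hy hxy => ?_
        have hsub : uIcc x y ⊆ Icc a b := uIcc_subset_Icc (hs hx) (hs hy)
        have hind : ∫ t in x..y, ‖(Icc a b).indicator g t‖ = ∫ t in x..y, ‖g t‖ :=
          intervalIntegral.integral_congr fun t ht => by rw [indicator_of_mem (hsub ht)]
        rw [hind]
        exact dist_le_integral_norm_of_eq_add_integral hg hφ (hs hx) (hs hy) hxy
    _ = 0 := setLIntegral_measure_zero _ _ hs₀

theorem ae_forall_preimage_of_eq_add_integral (hg : IntervalIntegrable g volume a b)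
    (hφ : ∀ t ∈ Icc a b, φ t = φ a + ∫ s in a..t, g s) {P : ℝ → Prop} (hP : ∀ᵐ t, P t) :
    ∀ᵐ y, ∀ t ∈ Icc a b, φ t = y → P t := by
  have hnull : volume (φ '' {t ∈ Icc a b | ¬P t}) = 0 :=
    volume_image_eq_zero_of_eq_add_integral hg hφ (sep_subset _ _)
      (measure_mono_null (fun _ ht => ht.2) (ae_iff.1 hP))
  filter_upwards [measure_eq_zero_iff_ae_notMem.1 hnull] with y hy t ht hφt
  by_contra hPt
  exact hy ⟨t, ⟨ht, hPt⟩, hφt⟩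

end PrimitiveRepresentation

noncomputable def lastHitTime (φ : ℝ → ℝ) (a b y : ℝ) : ℝ :=
  sSup {t ∈ Icc a b | φ t = y}

section LastHitTime

variable {φ : ℝ → ℝ} {a b : ℝ}

theorem isGreatest_lastHitTime (hab : a ≤ b) (hφ : ContinuousOn φ (Icc a b)) {y : ℝ}
    (hy : y ∈ Icc (φ b) (φ a)) : IsGreatest {t ∈ Icc a b | φ t = y} (lastHitTime φ a b y) := by
  obtain ⟨t, ht, hφt⟩ := intermediate_value_Icc' hab hφ hy
  exact (hφ.preimage_isClosed_of_isClosed isClosed_Icc isClosed_singleton).isGreatest_csSup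
    ⟨t, ht, hφt⟩ ⟨b, fun _ hs => hs.1.2⟩

theorem antitoneOn_lastHitTime (hab : a ≤ b) (hφ : ContinuousOn φ (Icc a b)) :
    AntitoneOn (lastHitTime φ a b) (Icc (φ b) (φ a)) := by
  intro y hy y' hy' hyy'
  obtain ⟨⟨hτ', hφτ'⟩, -⟩ := isGreatest_lastHitTime hab hφ hy'
  -- After the last visit to `y'`, `φ` still has to come down to `φ b ≤ y`.
  obtain ⟨t, ht, hφt⟩ := intermediate_value_Icc' hτ'.2 (hφ.mono (Icc_subset_Icc_left hτ'.1))
    ⟨hy.1, hφτ'.symm ▸ hyy'⟩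
  exact ht.1.trans ((isGreatest_lastHitTime hab hφ hy).2 ⟨⟨hτ'.1.trans ht.1, ht.2⟩, hφt⟩)

end LastHitTime

section Antitone

variable {τ : ℝ → ℝ} {a b : ℝ}

theorem AntitoneOn.ae_hasDerivAt (hτ : AntitoneOn τ (Icc a b)) :
    ∀ᵐ y, y ∈ Ioo a b → HasDerivAt τ (deriv τ y) y := by
  filter_upwards [hτ.neg.ae_differentiableWithinAt_of_mem] with y hy hyI
  have hdiff := (hy (Ioo_subset_Icc_self hyI)).differentiableAt (Icc_mem_nhds hyI.1 hyI.2)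
  have hτdiff : DifferentiableAt ℝ τ y := by simpa using hdiff.neg
  exact hτdiff.hasDerivAt

theorem AntitoneOn.deriv_nonpos (hτ : AntitoneOn τ (Icc a b)) {y : ℝ} (hy : y ∈ Ioo a b) :
    deriv τ y ≤ 0 := by
  rw [← derivWithin_of_mem_nhds (Icc_mem_nhds hy.1 hy.2)]
  exact hτ.derivWithin_nonpos

theorem AntitoneOn.setLIntegral_ofReal_neg_deriv_lt_top (hab : a ≤ b)
    (hτ : AntitoneOn τ (Icc a b)) : ∫⁻ y in Ioo a b, ENNReal.ofReal (-deriv τ y) < ∞ := by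
  have hint : IntegrableOn (deriv (-τ)) (Ioc a b) :=
    (intervalIntegrable_iff_integrableOn_Ioc_of_le hab).1
      (MonotoneOn.intervalIntegrable_deriv (by rw [uIcc_of_le hab]; exact hτ.neg))
  calc ∫⁻ y in Ioo a b, ENNReal.ofReal (-deriv τ y)
      ≤ ∫⁻ y in Ioc a b, ‖deriv (-τ) y‖ₑ := by
        refine (lintegral_mono fun y => ?_).trans (lintegral_mono_set Ioo_subset_Ioc_self)
        rw [deriv.neg']
        exact Real.ofReal_le_enorm _
    _ < ∞ := hint.hasFiniteIntegral

end Antitone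

theorem mul_eq_one_of_hasDerivAt_of_eventually_comp_eq {φ τ : ℝ → ℝ} {u d y : ℝ}
    (hφ : HasDerivAt φ u (τ y)) (hτ : HasDerivAt τ d y) (hcomp : ∀ᶠ z in 𝓝 y, φ (τ z) = z) :
    u * d = 1 :=
  (hφ.comp y hτ).unique ((hasDerivAt_id y).congr_of_eventuallyEq hcomp)

theorem inv_le_ofReal_neg_of_mul_eq_one {u d : ℝ} {F : ℝ≥0∞} (hud : u * d = 1) (hd : d ≤ 0)
    (hF : ENNReal.ofReal (-u) ≤ F) : F⁻¹ ≤ ENNReal.ofReal (-d) := by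
  have hd' : d < 0 := hd.lt_of_ne (by rintro rfl; simp at hud)
  have hu : u < 0 := by nlinarith
  rw [eq_inv_of_mul_eq_one_right hud, ← inv_neg, ENNReal.ofReal_inv_of_pos (neg_pos.2 hu)]
  exact ENNReal.inv_le_inv.2 hF

theorem ae_inv_le_neg_deriv_lastHitTime {f : ℝ → ℝ≥0∞} {φ g : ℝ → ℝ} {a s b : ℝ}
    (hg : IntervalIntegrable g volume a b) (hφ : ∀ t ∈ Icc a b, φ t = φ a + ∫ s in a..t, g s)
    (hderiv : ∀ᵐ t, t ∈ Ioo a b → HasDerivAt φ (g t) t)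
    (hsub : ∀ᵐ t, t ∈ Ioo a b → ENNReal.ofReal (-g t) ≤ f (φ t)) (has : a < s) (hsb : s ≤ b) :
    ∀ᵐ y, y ∈ Ioo (φ b) (φ s) → (f y)⁻¹ ≤ ENNReal.ofReal (-deriv (lastHitTime φ s b) y) := by
  have hcont := (continuousOn_of_eq_add_integral hg hφ).mono (Icc_subset_Icc_left has.le)
  set τ := lastHitTime φ s b
  have hτ : ∀ y ∈ Icc (φ b) (φ s), τ y ∈ Icc s b ∧ φ (τ y) = y := fun y hy =>
    (isGreatest_lastHitTime hsb hcont hy).1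
  have hτ_anti := antitoneOn_lastHitTime hsb hcont
  have hgood : ∀ᵐ t, t ∈ Ioo a b → HasDerivAt φ (g t) t ∧ ENNReal.ofReal (-g t) ≤ f (φ t) := by
    filter_upwards [hderiv, hsub] with t hφ' hle ht using ⟨hφ' ht, hle ht⟩
  filter_upwards [hτ_anti.ae_hasDerivAt, ae_forall_preimage_of_eq_add_integral hg hφ hgood]
    with y hτ' hgood_y hy
  obtain ⟨hτ_mem, hφτ⟩ := hτ y (Ioo_subset_Icc_self hy)
  have hτ_lt : τ y < b := hτ_mem.2.lt_of_ne fun h => hy.1.ne (by rw [← hφτ, h])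
  obtain ⟨hφ', hle⟩ := hgood_y (τ y) ⟨has.le.trans hτ_mem.1, hτ_mem.2⟩ hφτ
    ⟨has.trans_le hτ_mem.1, hτ_lt⟩
  have hcomp : ∀ᶠ z in 𝓝 y, φ (τ z) = z := by
    filter_upwards [Ioo_mem_nhds hy.1 hy.2] with z hz using (hτ z (Ioo_subset_Icc_self hz)).2
  exact inv_le_ofReal_neg_of_mul_eq_one
    (mul_eq_one_of_hasDerivAt_of_eventually_comp_eq hφ' (hτ' hy) hcomp)
    (hτ_anti.deriv_nonpos hy) (hle.trans_eq (congrArg f hφτ))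

theorem no_subharmonic_bump_general (f : ℝ → ℝ≥0∞)
    (hint : ∀ ε : ℝ, 0 < ε → ∫⁻ y in Set.Ioo 0 ε, (f y)⁻¹ = ∞)
    (r₁ r₀ : ℝ) (φ g : ℝ → ℝ)
    (hg_int : IntervalIntegrable g volume r₁ r₀)
    (hftc : ∀ t ∈ Set.Icc r₁ r₀, φ t = φ r₁ + ∫ s in r₁..t, g s)
    (hg_deriv : ∀ᵐ t ∂volume, t ∈ Set.Ioo r₁ r₀ → HasDerivAt φ (g t) t)
    (hφ0 : ∃ δ : ℝ, 0 < δ ∧ ∀ t ∈ Set.Icc (r₀ - δ) r₀, φ t = 0)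
    (hs₁ : ∃ s₁ ∈ Set.Ioo r₁ r₀, 0 < φ s₁)
    (hsub : ∀ᵐ t ∂volume, t ∈ Set.Ioo r₁ r₀ → ENNReal.ofReal (-g t) ≤ f (φ t)) :
    False := by
  obtain ⟨s₁, ⟨hr₁s₁, hs₁r₀⟩, hc⟩ := hs₁
  obtain ⟨δ, hδ, hφδ⟩ := hφ0
  have hφr₀ : φ r₀ = 0 := hφδ r₀ ⟨by linarith, le_rfl⟩
  have hcont := (continuousOn_of_eq_add_integral hg_int hftc).mono (Icc_subset_Icc_left hr₁s₁.le)
  have hbound := ae_inv_le_neg_deriv_lastHitTime hg_int hftc hg_deriv hsub hr₁s₁ hs₁r₀.le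
  have hfinite := (setLIntegral_mono_ae' measurableSet_Ioo hbound).trans_lt
    ((antitoneOn_lastHitTime hs₁r₀.le hcont).setLIntegral_ofReal_neg_deriv_lt_top
      (hφr₀ ▸ hc.le))
  rw [hφr₀, hint _ hc] at hfinite
  exact lt_irrefl _ hfinite

/-- One-variable lemma behind the strong maximum principle: if `∫₀⁺ dy/f(y) = ∞`, there can be
no nonnegative absolutely continuous function `φ` on `[r₁, r₀]`, vanishing near `r₀` but not
identically zero, with `φ' + f(φ) ≥ 0` a.e. (Absolute continuity is encoded by the fundamental
theorem of calculus with an integrable density `g` which is a.e. the derivative of `φ`.) -/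
theorem no_subharmonic_bump (f : ℝ → ℝ≥0∞)
    (husc : UpperSemicontinuousOn f (Set.Ici 0))
    (hf0 : f 0 = 0) (hfpos : ∀ y : ℝ, 0 < y → 0 < f y)
    (hint : ∀ ε : ℝ, 0 < ε → ∫⁻ y in Set.Ioo 0 ε, (f y)⁻¹ = ∞)
    (r₁ r₀ : ℝ) (hr : r₁ < r₀) (φ g : ℝ → ℝ)
    (hg_int : IntervalIntegrable g volume r₁ r₀)
    (hftc : ∀ t ∈ Set.Icc r₁ r₀, φ t = φ r₁ + ∫ s in r₁..t, g s)
    (hg_deriv : ∀ᵐ t ∂volume, t ∈ Set.Ioo r₁ r₀ → HasDerivAt φ (g t) t)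
    (hφnn : ∀ t ∈ Set.Icc r₁ r₀, 0 ≤ φ t)
    (hφ0 : ∃ δ : ℝ, 0 < δ ∧ ∀ t ∈ Set.Icc (r₀ - δ) r₀, φ t = 0)
    (hs₁ : ∃ s₁ ∈ Set.Ioo r₁ r₀, 0 < φ s₁)
    (hsub : ∀ᵐ t ∂volume, t ∈ Set.Ioo r₁ r₀ → ENNReal.ofReal (-g t) ≤ f (φ t)) :
    False :=
  no_subharmonic_bump_general f hint r₁ r₀ φ g hg_int hftc hg_deriv hφ0 hs₁ hsub
end

section
/- Let f: [0,∞) → [0,∞] be upper semi-continuous, increasing, f(0) = 0, with ∫₀⁺ dy/f(y) < ∞. Define s(y) = ∫₀^y dt/f(t). Then there exist y₀ > 0 and s₀ = s(y₀) < ∞ such that s restricts to a strictly increasing homeomorphism from [0, y₀] onto [0, s₀], and its inverse y(s) is Lipschitz on [0, s₀] with Lipschitz constant f(y₀), satisfies y(0) = 0, y is differentiable from the right at 0 with derivative 0, and y'(s) = f(y(s)) almost everywhere. -/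
/-!
Monotonicity of `f` gives the key estimate `(y₂ - y₁) / f(y₂) ≤ s(y₂) - s(y₁)` for
`0 ≤ y₁ ≤ y₂`. Upper semicontinuity at `0` yields `y₀ > 0` with `f(y₀) < ∞`; on `[0, y₀]` the
estimate makes `s` strictly increasing with an `f(y₀)`-Lipschitz inverse `y`, and with `y₁ = 0`
it bounds `y(s) / s` by `f(y(s)) → 0`. Off the countably many discontinuities of `f`, the
fundamental theorem of calculus gives `s' = 1 / f`, and the inverse function theorem `y' = f(y)`.
-/

open MeasureTheory
open scoped ENNReal

/-- The "arc length" function `s(y) = ∫₀ʸ dt/f(t)` (realified). -/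
noncomputable def Sfun (f : ℝ → ℝ≥0∞) (y : ℝ) : ℝ :=
  (∫⁻ t in Set.Ioo 0 y, (f t)⁻¹).toReal

open Set Filter Topology

theorem UpperSemicontinuousWithinAt.continuousWithinAt_of_eq_zero {α : Type*}
    [TopologicalSpace α] {f : α → ℝ≥0∞} {s : Set α} {x : α}
    (h : UpperSemicontinuousWithinAt f s x) (h0 : f x = 0) : ContinuousWithinAt f s x :=
  -- lower semicontinuity is vacuous at a point where `f` vanishes
  continuousWithinAt_iff_lower_upperSemicontinuousWithinAt.2
    ⟨fun y hy => absurd hy (by simp [h0]), h⟩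

theorem hasDerivWithinAt_Ici_zero_of_abs_le_mul {Y φ : ℝ → ℝ} (hY0 : Y 0 = 0)
    (hφ : Tendsto φ (𝓝[>] 0) (𝓝 0)) (hle : ∀ᶠ s in 𝓝[>] 0, |Y s| ≤ φ s * s) :
    HasDerivWithinAt Y 0 (Ici 0) 0 := by
  rw [hasDerivWithinAt_iff_tendsto_slope, Ici_sdiff_left]
  refine squeeze_zero_norm' ?_ hφ
  filter_upwards [hle, self_mem_nhdsWithin] with s hs (hs0 : 0 < s)
  rw [slope_def_field, hY0, sub_zero, sub_zero, norm_div, Real.norm_eq_abs, Real.norm_eq_abs,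
    abs_of_pos hs0, div_le_iff₀ hs0]
  exact hs

theorem lipschitzOnWith_of_rightInvOn {α β : Type*} [PseudoMetricSpace α] [PseudoMetricSpace β]
    {S : α → β} {Y : β → α} {s : Set α} {t : Set β} {K : NNReal} (hY : MapsTo Y t s)
    (hSY : RightInvOn Y S t) (hS : ∀ x ∈ s, ∀ y ∈ s, dist x y ≤ K * dist (S x) (S y)) :
    LipschitzOnWith K Y t :=
  LipschitzOnWith.of_dist_le_mul fun a ha b hb => by
    simpa only [hSY ha, hSY hb] using hS _ (hY ha) _ (hY hb)

variable {f : ℝ → ℝ≥0∞}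

@[simp]
theorem Sfun_zero : Sfun f 0 = 0 := by
  simp [Sfun]

theorem Sfun_mono {a b : ℝ} (hab : a ≤ b) (hfin : ∫⁻ t in Ioo 0 b, (f t)⁻¹ ≠ ⊤) :
    Sfun f a ≤ Sfun f b :=
  ENNReal.toReal_mono hfin (lintegral_mono_set (Ioo_subset_Ioo_right hab))

theorem lintegral_inv_Ioo_ne_top_of_le {y y₀ : ℝ} (hfin : ∫⁻ t in Ioo 0 y₀, (f t)⁻¹ ≠ ⊤)
    (hy : y ≤ y₀) : ∫⁻ t in Ioo 0 y, (f t)⁻¹ ≠ ⊤ :=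
  ne_top_of_le_ne_top hfin (lintegral_mono_set (Ioo_subset_Ioo_right hy))

theorem apply_ne_top_of_mem_Icc (hf : MonotoneOn f (Ici 0)) {y y₀ : ℝ} (hfy₀ : f y₀ ≠ ⊤)
    (hy : y ∈ Icc 0 y₀) : f y ≠ ⊤ :=
  ne_top_of_le_ne_top hfy₀ (hf hy.1 (hy.1.trans hy.2) hy.2)

section Monotone

variable (hf : MonotoneOn f (Ici 0))
include hf

theorem lintegral_inv_Ioo_add_le {a b : ℝ} (ha : 0 ≤ a) (hab : a ≤ b) :
    (∫⁻ t in Ioo 0 a, (f t)⁻¹) + ENNReal.ofReal (b - a) * (f b)⁻¹ ≤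
      ∫⁻ t in Ioo 0 b, (f t)⁻¹ := by
  have hdisj : Disjoint (Ioo 0 a) (Ioo a b) :=
    disjoint_left.2 fun t h₁ h₂ => (h₁.2.trans h₂.1).false
  calc (∫⁻ t in Ioo 0 a, (f t)⁻¹) + ENNReal.ofReal (b - a) * (f b)⁻¹
      = (∫⁻ t in Ioo 0 a, (f t)⁻¹) + ∫⁻ _ in Ioo a b, (f b)⁻¹ := by
        rw [setLIntegral_const, Real.volume_Ioo, mul_comm]
    _ ≤ (∫⁻ t in Ioo 0 a, (f t)⁻¹) + ∫⁻ t in Ioo a b, (f t)⁻¹ := by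
        refine add_le_add le_rfl (setLIntegral_mono' measurableSet_Ioo fun t ht =>
          ENNReal.inv_le_inv.2 (hf (ha.trans ht.1.le) (ha.trans hab) ht.2.le))
    _ = ∫⁻ t in Ioo 0 a ∪ Ioo a b, (f t)⁻¹ := (lintegral_union measurableSet_Ioo hdisj).symm
    _ ≤ ∫⁻ t in Ioo 0 b, (f t)⁻¹ :=
        lintegral_mono_set (union_subset (Ioo_subset_Ioo_right hab) (Ioo_subset_Ioo_left ha))

theorem pos_of_lintegral_inv_ne_top {b : ℝ} (hb : 0 < b)
    (hfin : ∫⁻ t in Ioo 0 b, (f t)⁻¹ ≠ ⊤) : 0 < f b := by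
  refine pos_iff_ne_zero.2 fun hb0 => hfin (top_le_iff.1 ?_)
  have h := le_add_self.trans (lintegral_inv_Ioo_add_le hf le_rfl hb.le)
  rwa [hb0, ENNReal.inv_zero, sub_zero, ENNReal.mul_top (ENNReal.ofReal_pos.2 hb).ne'] at h

theorem sub_div_le_Sfun_sub {a b : ℝ} (ha : 0 ≤ a) (hab : a ≤ b)
    (hfin : ∫⁻ t in Ioo 0 b, (f t)⁻¹ ≠ ⊤) :
    (b - a) / (f b).toReal ≤ Sfun f b - Sfun f a := by
  have h := lintegral_inv_Ioo_add_le hf ha hab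
  obtain ⟨ha_fin, hba_fin⟩ := ENNReal.add_ne_top.1 (ne_top_of_le_ne_top hfin h)
  have h' := ENNReal.toReal_mono hfin h
  rw [ENNReal.toReal_add ha_fin hba_fin, ENNReal.toReal_mul,
    ENNReal.toReal_ofReal (sub_nonneg.2 hab), ENNReal.toReal_inv] at h'
  rw [Sfun, Sfun, div_eq_mul_inv]
  linarith

theorem sub_le_mul_Sfun_sub {a b : ℝ} (ha : 0 ≤ a) (hab : a ≤ b)
    (hfin : ∫⁻ t in Ioo 0 b, (f t)⁻¹ ≠ ⊤) (hfb : f b ≠ ⊤) :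
    b - a ≤ (f b).toReal * (Sfun f b - Sfun f a) := by
  rcases hab.eq_or_lt with rfl | hlt
  · simp
  have hpos : 0 < (f b).toReal :=
    ENNReal.toReal_pos (pos_of_lintegral_inv_ne_top hf (ha.trans_lt hlt) hfin).ne' hfb
  exact (div_le_iff₀' hpos).1 (sub_div_le_Sfun_sub hf ha hab hfin)

theorem aemeasurable_inv_restrict_Ioo (y : ℝ) :
    AEMeasurable (fun t => (f t)⁻¹) (volume.restrict (Ioo 0 y)) :=
  ((aemeasurable_restrict_of_monotoneOn measurableSet_Ici hf).mono_set
    (Ioo_subset_Ioi_self.trans Ioi_subset_Ici_self)).inv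

theorem Sfun_eq_integral {y : ℝ} (hfin : ∫⁻ t in Ioo 0 y, (f t)⁻¹ ≠ ⊤) :
    Sfun f y = ∫ t in Ioc 0 y, ((f t)⁻¹).toReal := by
  have hmeas := aemeasurable_inv_restrict_Ioo hf y
  rw [integral_Ioc_eq_integral_Ioo, integral_toReal hmeas (ae_lt_top' hmeas hfin), Sfun]

variable {y₀ : ℝ} (hfin : ∫⁻ t in Ioo 0 y₀, (f t)⁻¹ ≠ ⊤)
include hfin

theorem integrableOn_inv_toReal : IntegrableOn (fun t => ((f t)⁻¹).toReal) (Icc 0 y₀) := by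
  rw [IntegrableOn, ← Measure.restrict_congr_set Ioo_ae_eq_Icc]
  exact integrable_toReal_of_lintegral_ne_top (aemeasurable_inv_restrict_Ioo hf y₀) hfin

theorem continuousOn_Sfun : ContinuousOn (Sfun f) (Icc 0 y₀) :=
  (intervalIntegral.continuousOn_primitive (integrableOn_inv_toReal hf hfin)).congr fun _ hy =>
    Sfun_eq_integral hf (lintegral_inv_Ioo_ne_top_of_le hfin hy.2)

theorem hasDerivAt_Sfun {y : ℝ} (hy : y ∈ Ioo 0 y₀) (hc : ContinuousAt f y) :
    HasDerivAt (Sfun f) ((f y)⁻¹).toReal y := by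
  have hint := integrableOn_inv_toReal hf hfin
  have hfy : (f y)⁻¹ ≠ ⊤ := ENNReal.inv_ne_top.2
    (pos_of_lintegral_inv_ne_top hf hy.1 (lintegral_inv_Ioo_ne_top_of_le hfin hy.2.le)).ne'
  have hsub : uIcc 0 y ⊆ Icc 0 y₀ := by
    rw [uIcc_of_le hy.1.le]
    exact Icc_subset_Icc_right hy.2.le
  have hFTC := intervalIntegral.integral_hasDerivAt_right (hint.mono_set hsub).intervalIntegrable
    ⟨Ioo 0 y₀, Ioo_mem_nhds hy.1 hy.2, (hint.mono_set Ioo_subset_Icc_self).aestronglyMeasurable⟩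
    ((ENNReal.tendsto_toReal hfy).comp hc.inv)
  refine hFTC.congr_of_eventuallyEq ?_
  filter_upwards [Ioo_mem_nhds hy.1 hy.2] with u hu
  rw [Sfun_eq_integral hf (lintegral_inv_Ioo_ne_top_of_le hfin hu.2.le),
    intervalIntegral.integral_of_le hu.1.le]

variable (hfy₀ : f y₀ ≠ ⊤)
include hfy₀

theorem sub_le_mul_Sfun_sub_of_le {a b : ℝ} (ha : 0 ≤ a) (hab : a ≤ b) (hb : b ≤ y₀) :
    b - a ≤ (f y₀).toReal * (Sfun f b - Sfun f a) := by
  have hfinb := lintegral_inv_Ioo_ne_top_of_le hfin hb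
  calc b - a ≤ (f b).toReal * (Sfun f b - Sfun f a) :=
        sub_le_mul_Sfun_sub hf ha hab hfinb (apply_ne_top_of_mem_Icc hf hfy₀ ⟨ha.trans hab, hb⟩)
    _ ≤ (f y₀).toReal * (Sfun f b - Sfun f a) :=
        mul_le_mul_of_nonneg_right
          (ENNReal.toReal_mono hfy₀ (hf (ha.trans hab) (ha.trans (hab.trans hb)) hb))
          (sub_nonneg.2 (Sfun_mono hab hfinb))

theorem strictMonoOn_Sfun : StrictMonoOn (Sfun f) (Icc 0 y₀) := by
  intro a ha b hb hab
  have h := sub_le_mul_Sfun_sub_of_le hf hfin hfy₀ ha.1 hab.le hb.2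
  by_contra! hba
  linarith [mul_nonpos_of_nonneg_of_nonpos (ENNReal.toReal_nonneg (a := f y₀))
    (sub_nonpos.2 hba)]

theorem dist_le_mul_dist_Sfun {a b : ℝ} (ha : a ∈ Icc 0 y₀) (hb : b ∈ Icc 0 y₀) :
    dist a b ≤ (f y₀).toReal * dist (Sfun f a) (Sfun f b) := by
  wlog hab : a ≤ b generalizing a b
  · rw [dist_comm, dist_comm (Sfun f a)]
    exact this hb ha (le_of_not_ge hab)
  have hS := Sfun_mono hab (lintegral_inv_Ioo_ne_top_of_le hfin hb.2)
  rw [dist_comm, dist_comm (Sfun f a), Real.dist_eq, Real.dist_eq,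
    abs_of_nonneg (sub_nonneg.2 hab), abs_of_nonneg (sub_nonneg.2 hS)]
  exact sub_le_mul_Sfun_sub_of_le hf hfin hfy₀ ha.1 hab hb.2

theorem Sfun_pos (hy₀ : 0 < y₀) : 0 < Sfun f y₀ := by
  simpa using strictMonoOn_Sfun hf hfin hfy₀ (left_mem_Icc.2 hy₀.le) (right_mem_Icc.2 hy₀.le) hy₀

omit hfy₀ in
theorem hasDerivAt_of_local_left_inverse_Sfun {Y : ℝ → ℝ} {s : ℝ} (hYs : Y s ∈ Ioo 0 y₀)
    (hc : ContinuousAt f (Y s)) (hfYs : f (Y s) ≠ ⊤) (hYc : ContinuousAt Y s)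
    (hSY : ∀ᶠ t in 𝓝 s, Sfun f (Y t) = t) : HasDerivAt Y (f (Y s)).toReal s := by
  have hpos : 0 < (f (Y s)).toReal := ENNReal.toReal_pos
    (pos_of_lintegral_inv_ne_top hf hYs.1 (lintegral_inv_Ioo_ne_top_of_le hfin hYs.2.le)).ne' hfYs
  have h := (hasDerivAt_Sfun hf hfin hYs hc).of_local_left_inverse hYc
    (by simpa only [ENNReal.toReal_inv] using (inv_pos.2 hpos).ne') hSY
  rwa [ENNReal.toReal_inv, inv_inv] at h

variable {Y : ℝ → ℝ} (hinv : InvOn Y (Sfun f) (Icc 0 y₀) (Icc 0 (Sfun f y₀)))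
  (hYmaps : MapsTo Y (Icc 0 (Sfun f y₀)) (Icc 0 y₀))
include hinv hYmaps

theorem lipschitzOnWith_of_invOn_Sfun : LipschitzOnWith (f y₀).toNNReal Y (Icc 0 (Sfun f y₀)) :=
  lipschitzOnWith_of_rightInvOn hYmaps hinv.2 fun _ ha _ hb =>
    dist_le_mul_dist_Sfun hf hfin hfy₀ ha hb

theorem hasDerivWithinAt_zero_of_invOn_Sfun (hy₀ : 0 < y₀) (hf0 : Tendsto f (𝓝[≥] 0) (𝓝 0)) :
    HasDerivWithinAt Y 0 (Ici 0) 0 := by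
  have hs₀ := Sfun_pos hf hfin hfy₀ hy₀
  have hY0 : Y 0 = 0 := by simpa using hinv.1 (left_mem_Icc.2 hy₀.le)
  have hYc : Tendsto Y (𝓝[>] 0) (𝓝[≥] 0) := by
    refine tendsto_nhdsWithin_iff.2 ⟨?_, ?_⟩
    · have := ((lipschitzOnWith_of_invOn_Sfun hf hfin hfy₀ hinv hYmaps).continuousOn 0
        (left_mem_Icc.2 hs₀.le)).mono_of_mem_nhdsWithin (Icc_mem_nhdsGT hs₀)
      simpa [hY0] using this.tendsto
    · filter_upwards [Icc_mem_nhdsGT hs₀] with s hs using (hYmaps hs).1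
  refine hasDerivWithinAt_Ici_zero_of_abs_le_mul hY0
    (by simpa using (ENNReal.tendsto_toReal ENNReal.zero_ne_top).comp (hf0.comp hYc)) ?_
  filter_upwards [Icc_mem_nhdsGT hs₀] with s hs
  have h := sub_le_mul_Sfun_sub hf le_rfl (hYmaps hs).1
    (lintegral_inv_Ioo_ne_top_of_le hfin (hYmaps hs).2)
    (apply_ne_top_of_mem_Icc hf hfy₀ (hYmaps hs))
  rw [hinv.2 hs, Sfun_zero, sub_zero, sub_zero] at h
  rwa [abs_of_nonneg (hYmaps hs).1]

theorem ae_hasDerivAt_of_invOn_Sfun :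
    ∀ᵐ s, s ∈ Icc 0 (Sfun f y₀) → HasDerivAt Y (f (Y s)).toReal s := by
  set D := {y ∈ Ioi 0 | ¬ContinuousWithinAt f (Ioi 0) y}
  have hD : D.Countable := (hf.mono Ioi_subset_Ici_self).countable_not_continuousWithinAt
  have hE : (insert 0 (insert (Sfun f y₀) (Sfun f '' D))).Countable :=
    ((hD.image _).insert _).insert _
  filter_upwards [measure_eq_zero_iff_ae_notMem.1 (hE.measure_zero volume)] with s hsE hs
  simp only [mem_insert_iff, not_or] at hsE
  obtain ⟨hs0, hs₀, hsD⟩ := hsE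
  have hsIoo : s ∈ Ioo 0 (Sfun f y₀) := ⟨hs.1.lt_of_ne' hs0, hs.2.lt_of_ne hs₀⟩
  have hYs : Y s ∈ Ioo 0 y₀ := by
    refine ⟨(hYmaps hs).1.lt_of_ne' fun h => hs0 ?_, (hYmaps hs).2.lt_of_ne fun h => hs₀ ?_⟩
    · rw [← hinv.2 hs, h, Sfun_zero]
    · rw [← hinv.2 hs, h]
  have hc : ContinuousAt f (Y s) := by
    by_contra h
    exact hsD ⟨Y s, ⟨hYs.1, fun h' => h (h'.continuousAt (Ioi_mem_nhds hYs.1))⟩, hinv.2 hs⟩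
  have hIcc : Icc 0 (Sfun f y₀) ∈ 𝓝 s := Icc_mem_nhds hsIoo.1 hsIoo.2
  exact hasDerivAt_of_local_left_inverse_Sfun hf hfin hYs hc
    (apply_ne_top_of_mem_Icc hf hfy₀ (hYmaps hs))
    ((lipschitzOnWith_of_invOn_Sfun hf hfin hfy₀ hinv hYmaps).continuousOn.continuousAt hIcc)
    (Filter.mem_of_superset hIcc fun t ht => hinv.2 ht)

end Monotone

/-- If `f : [0,∞) → [0,∞]` is upper semi-continuous, increasing, `f(0) = 0`, and
`∫₀⁺ dy/f(y) < ∞`, then `s(y) = ∫₀ʸ dt/f(t)` restricts, for some `y₀ > 0` and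
`s₀ = s(y₀)`, to a strictly increasing homeomorphism of `[0, y₀]` onto `[0, s₀]` whose
inverse `Y` is Lipschitz with constant `f(y₀)`, satisfies `Y(0) = 0`, has right derivative `0`
at `0`, and satisfies `Y'(s) = f(Y(s))` almost everywhere. -/
theorem inverse_of_arclength (f : ℝ → ℝ≥0∞)
    (husc : UpperSemicontinuousOn f (Set.Ici 0))
    (hmono : MonotoneOn f (Set.Ici 0)) (hf0 : f 0 = 0)
    (hint : ∃ ε : ℝ, 0 < ε ∧ ∫⁻ y in Set.Ioo 0 ε, (f y)⁻¹ < ∞) :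
    ∃ y₀ : ℝ, 0 < y₀ ∧ ∃ s₀ : ℝ, 0 < s₀ ∧ Sfun f y₀ = s₀ ∧
      StrictMonoOn (Sfun f) (Set.Icc 0 y₀) ∧
      ContinuousOn (Sfun f) (Set.Icc 0 y₀) ∧
      Sfun f '' Set.Icc 0 y₀ = Set.Icc 0 s₀ ∧
      ∃ Y : ℝ → ℝ,
        (∀ t ∈ Set.Icc 0 y₀, Y (Sfun f t) = t) ∧
        (∀ s ∈ Set.Icc 0 s₀, Sfun f (Y s) = s) ∧
        LipschitzOnWith (f y₀).toNNReal Y (Set.Icc 0 s₀) ∧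
        Y 0 = 0 ∧
        HasDerivWithinAt Y 0 (Set.Ici 0) 0 ∧
        ∀ᵐ s ∂volume, s ∈ Set.Icc 0 s₀ → HasDerivAt Y (f (Y s)).toReal s := by
  obtain ⟨ε, hε, hεfin⟩ := hint
  have hf0' : Tendsto f (𝓝[≥] 0) (𝓝 0) := by
    simpa [hf0] using (UpperSemicontinuousWithinAt.continuousWithinAt_of_eq_zero
      (husc 0 self_mem_Ici) hf0).tendsto
  have hf_lt_top : ∀ᶠ t in 𝓝[>] 0, f t < ⊤ :=
    (hf0'.mono_left (nhdsWithin_mono _ Ioi_subset_Ici_self)).eventually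
      (gt_mem_nhds ENNReal.zero_lt_top)
  obtain ⟨y₀, ⟨hy₀, hy₀ε⟩, hfy₀⟩ : ∃ y₀ ∈ Ioc 0 ε, f y₀ ≠ ⊤ :=
    (Filter.Eventually.and (Ioc_mem_nhdsGT hε) hf_lt_top).exists.imp fun _ h => ⟨h.1, h.2.ne⟩
  have hfin : ∫⁻ t in Ioo 0 y₀, (f t)⁻¹ ≠ ⊤ := lintegral_inv_Ioo_ne_top_of_le hεfin.ne hy₀ε
  have hsm := strictMonoOn_Sfun hmono hfin hfy₀
  have hcont := continuousOn_Sfun hmono hfin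
  have himage : Sfun f '' Icc 0 y₀ = Icc 0 (Sfun f y₀) := by
    simpa using hcont.image_Icc_of_monotoneOn hy₀.le hsm.monotoneOn
  have hbij : BijOn (Sfun f) (Icc 0 y₀) (Icc 0 (Sfun f y₀)) := himage ▸ hsm.injOn.bijOn_image
  have hinv := hbij.invOn_invFunOn
  have hYmaps := (BijOn.symm hinv.symm hbij).mapsTo
  exact ⟨y₀, hy₀, _, Sfun_pos hmono hfin hfy₀ hy₀, rfl, hsm, hcont, himage, _, hinv.1, hinv.2,
    lipschitzOnWith_of_invOn_Sfun hmono hfin hfy₀ hinv hYmaps,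
    by simpa using hinv.1 (left_mem_Icc.2 hy₀.le),
    hasDerivWithinAt_zero_of_invOn_Sfun hmono hfin hfy₀ hinv hYmaps hy₀ hf0',
    ae_hasDerivAt_of_invOn_Sfun hmono hfin hfy₀ hinv hYmaps⟩
end

section
/- Let g: [0,∞) → ℝ be continuous, decreasing, with g(0) = 0 and g(x) < 0 for x > 0. Define M(g) := {A ∈ Sym(n) : tr A ≥ 0 and λ_min(A) ≥ g(tr A)}. Then M(g) is a closed set satisfying positivity (M(g) + P ⊆ M(g)), is invariant under orthogonal conjugation, satisfies M(g) ∩ {tr A = 0} = {0}, and P − {0} ⊆ interior(M(g)). -/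
/-! Everything reduces to the variational description of the smallest eigenvalue:
`λ_min A ≤ vᵀ A v` for every unit vector `v`, with equality at a unit eigenvector. Hence `λ_min`
increases when a positive semidefinite matrix is added, is invariant under orthogonal
conjugation, and satisfies `|λ_min A - λ_min B| ≤ ∑ |A_ij - B_ij|`, so it is continuous; with
`g ∘ tr` continuous this makes `M(g)` closed and `{tr > 0, λ_min > g ∘ tr}` an open subset of it,
which contains `P \ {0}` because there `g (tr A) < 0 ≤ λ_min A`. On `tr A = 0` membership says
`λ_min A ≥ g 0 = 0`, so `A` is positive semidefinite with zero trace, i.e. `A = 0`. -/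

open Pointwise Matrix

/-- The eigenvalues of a symmetric real matrix. -/
noncomputable def symEigs {n : ℕ} (A : SymSpace n) : Fin n → ℝ :=
  (show (A : Matrix (Fin n) (Fin n) ℝ).IsHermitian from A.2).eigenvalues

/-- The smallest eigenvalue of a symmetric real matrix. -/
noncomputable def lambdaMin {n : ℕ} (A : SymSpace n) : ℝ := ⨅ i, symEigs A i

/-- The largest eigenvalue of a symmetric real matrix. -/
noncomputable def lambdaMax {n : ℕ} (A : SymSpace n) : ℝ := ⨆ i, symEigs A i

/-- The set `M(g) = {A ∈ Sym(n) : tr A ≥ 0 and λ_min(A) ≥ g(tr A)}`. -/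
def Mset (n : ℕ) (g : ℝ → ℝ) : Set (SymSpace n) :=
  {A | 0 ≤ (A : Matrix (Fin n) (Fin n) ℝ).trace ∧
       g ((A : Matrix (Fin n) (Fin n) ℝ).trace) ≤ lambdaMin A}

namespace SymSpace

variable {n : ℕ}

lemma lambdaMin_of_isEmpty [IsEmpty (Fin n)] (A : SymSpace n) : lambdaMin A = 0 :=
  Real.iInf_of_isEmpty _

lemma lambdaMin_le_symEigs (A : SymSpace n) (i : Fin n) : lambdaMin A ≤ symEigs A i :=
  ciInf_le (Set.finite_range _).bddBelow i

lemma exists_symEigs_eq_lambdaMin [Nonempty (Fin n)] (A : SymSpace n) :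
    ∃ i, symEigs A i = lambdaMin A := by
  obtain ⟨i, hi⟩ := Finite.exists_min (symEigs A)
  exact ⟨i, le_antisymm (le_ciInf hi) (lambdaMin_le_symEigs A i)⟩

lemma posSemidef_iff_lambdaMin_nonneg (A : SymSpace n) :
    (A : Matrix (Fin n) (Fin n) ℝ).PosSemidef ↔ 0 ≤ lambdaMin A := by
  rw [IsHermitian.posSemidef_iff_eigenvalues_nonneg A.2]
  refine ⟨fun h => ?_, fun h i => h.trans (lambdaMin_le_symEigs A i)⟩
  cases isEmpty_or_nonempty (Fin n)
  · rw [lambdaMin_of_isEmpty]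
  · exact le_ciInf h

/-- Diagonalising `A = U D Uᵀ`, the quadratic form of `A` at `x` is that of `D` at `y = Uᵀ x`. -/
lemma exists_dotProduct_mulVec_eq_sum_symEigs (A : SymSpace n) (x : Fin n → ℝ) :
    ∃ y : Fin n → ℝ, y ⬝ᵥ y = x ⬝ᵥ x ∧
      x ⬝ᵥ ((A : Matrix (Fin n) (Fin n) ℝ) *ᵥ x) = ∑ i, symEigs A i * y i ^ 2 := by
  have hA : (A : Matrix (Fin n) (Fin n) ℝ).IsHermitian := A.2
  set U : Matrix (Fin n) (Fin n) ℝ := (hA.eigenvectorUnitary : Matrix (Fin n) (Fin n) ℝ)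
  have hstar : star U = Uᵀ := by ext i j; simp [Matrix.star_apply]
  have hUUt : U * Uᵀ = 1 := hstar ▸ Matrix.mem_unitaryGroup_iff.mp hA.eigenvectorUnitary.2
  refine ⟨Uᵀ *ᵥ x, ?_, ?_⟩
  · rw [dotProduct_mulVec, vecMul_transpose, mulVec_mulVec, hUUt, one_mulVec]
  · conv_lhs => rw [hA.spectral_theorem, Unitary.conjStarAlgAut_apply, hstar]
    rw [← mulVec_mulVec, ← mulVec_mulVec, dotProduct_mulVec x, ← mulVec_transpose]
    simp only [dotProduct, mulVec_diagonal]
    refine Finset.sum_congr rfl fun i _ => ?_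
    simp only [Function.comp_apply, RCLike.ofReal_real_eq_id, id_eq, symEigs]
    ring

lemma lambdaMin_le_dotProduct_mulVec (A : SymSpace n) {v : Fin n → ℝ} (hv : v ⬝ᵥ v = 1) :
    lambdaMin A ≤ v ⬝ᵥ ((A : Matrix (Fin n) (Fin n) ℝ) *ᵥ v) := by
  obtain ⟨y, hy, hAv⟩ := exists_dotProduct_mulVec_eq_sum_symEigs A v
  calc lambdaMin A = ∑ i, lambdaMin A * y i ^ 2 := by
        rw [← Finset.mul_sum, show ∑ i, y i ^ 2 = 1 by rw [← hv, ← hy]; simp only [dotProduct, sq],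
          mul_one]
    _ ≤ ∑ i, symEigs A i * y i ^ 2 := Finset.sum_le_sum fun i _ =>
        mul_le_mul_of_nonneg_right (lambdaMin_le_symEigs A i) (sq_nonneg _)
    _ = _ := hAv.symm

lemma exists_dotProduct_mulVec_eq_lambdaMin [Nonempty (Fin n)] (A : SymSpace n) :
    ∃ v : Fin n → ℝ, v ⬝ᵥ v = 1 ∧ v ⬝ᵥ ((A : Matrix (Fin n) (Fin n) ℝ) *ᵥ v) = lambdaMin A := by
  have hA : (A : Matrix (Fin n) (Fin n) ℝ).IsHermitian := A.2
  obtain ⟨i, hi⟩ := exists_symEigs_eq_lambdaMin A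
  set v : EuclideanSpace ℝ (Fin n) := hA.eigenvectorBasis i
  have hv : (v : Fin n → ℝ) ⬝ᵥ v = 1 := by
    have h := real_inner_self_eq_norm_sq v
    rw [hA.eigenvectorBasis.orthonormal.1 i, one_pow, EuclideanSpace.inner_eq_star_dotProduct,
      star_trivial] at h
    exact h
  refine ⟨v, hv, ?_⟩
  rw [hA.mulVec_eigenvectorBasis, dotProduct_smul, hv, ← hi]
  simp [symEigs]

lemma lambdaMin_le_lambdaMin_add_of_forall {A B : SymSpace n} {c : ℝ} (hc : 0 ≤ c)
    (h : ∀ v : Fin n → ℝ, v ⬝ᵥ v = 1 →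
      lambdaMin A ≤ v ⬝ᵥ ((B : Matrix (Fin n) (Fin n) ℝ) *ᵥ v) + c) :
    lambdaMin A ≤ lambdaMin B + c := by
  cases isEmpty_or_nonempty (Fin n)
  · simpa [lambdaMin_of_isEmpty] using hc
  · obtain ⟨v, hv, hBv⟩ := exists_dotProduct_mulVec_eq_lambdaMin B
    exact hBv ▸ h v hv

lemma lambdaMin_le_lambdaMin_add (A : SymSpace n) {B : SymSpace n}
    (hB : (B : Matrix (Fin n) (Fin n) ℝ).PosSemidef) : lambdaMin A ≤ lambdaMin (A + B) := by
  refine add_zero (lambdaMin (A + B)) ▸ lambdaMin_le_lambdaMin_add_of_forall le_rfl fun v hv => ?_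
  have hBv : 0 ≤ v ⬝ᵥ ((B : Matrix (Fin n) (Fin n) ℝ) *ᵥ v) := by
    simpa using hB.dotProduct_mulVec_nonneg v
  simp only [AddMemClass.coe_add, add_mulVec, dotProduct_add, add_zero]
  linarith [lambdaMin_le_dotProduct_mulVec A hv]

lemma lambdaMin_le_lambdaMin_of_conj {A B : SymSpace n} {Q : Matrix (Fin n) (Fin n) ℝ}
    (hQ : Qᵀ * Q = 1)
    (hB : (B : Matrix (Fin n) (Fin n) ℝ) = Qᵀ * (A : Matrix (Fin n) (Fin n) ℝ) * Q) :
    lambdaMin A ≤ lambdaMin B := by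
  refine add_zero (lambdaMin B) ▸ lambdaMin_le_lambdaMin_add_of_forall le_rfl fun v hv => ?_
  have hQv : (Q *ᵥ v) ⬝ᵥ (Q *ᵥ v) = 1 := by
    rw [dotProduct_mulVec, ← mulVec_transpose, mulVec_mulVec, hQ, one_mulVec, hv]
  have hBv : v ⬝ᵥ ((B : Matrix (Fin n) (Fin n) ℝ) *ᵥ v)
      = (Q *ᵥ v) ⬝ᵥ ((A : Matrix (Fin n) (Fin n) ℝ) *ᵥ (Q *ᵥ v)) := by
    rw [hB, ← mulVec_mulVec, ← mulVec_mulVec, dotProduct_mulVec v, vecMul_transpose]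
  rw [hBv, add_zero]
  exact lambdaMin_le_dotProduct_mulVec A hQv

lemma lambdaMin_eq_of_conj {A B : SymSpace n} {Q : Matrix (Fin n) (Fin n) ℝ} (hQ : Qᵀ * Q = 1)
    (hB : (B : Matrix (Fin n) (Fin n) ℝ) = Qᵀ * (A : Matrix (Fin n) (Fin n) ℝ) * Q) :
    lambdaMin B = lambdaMin A := by
  have hQQ : Q * Qᵀ = 1 := mul_eq_one_comm.mp hQ
  refine le_antisymm (lambdaMin_le_lambdaMin_of_conj (Q := Qᵀ) ?_ ?_)
    (lambdaMin_le_lambdaMin_of_conj hQ hB)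
  · rwa [transpose_transpose]
  · rw [transpose_transpose, hB, ← Matrix.mul_assoc, ← Matrix.mul_assoc, hQQ, one_mul,
      Matrix.mul_assoc, hQQ, mul_one]

lemma trace_eq_of_conj {A B : SymSpace n} {Q : Matrix (Fin n) (Fin n) ℝ} (hQ : Qᵀ * Q = 1)
    (hB : (B : Matrix (Fin n) (Fin n) ℝ) = Qᵀ * (A : Matrix (Fin n) (Fin n) ℝ) * Q) :
    (B : Matrix (Fin n) (Fin n) ℝ).trace = (A : Matrix (Fin n) (Fin n) ℝ).trace := by
  rw [hB, trace_mul_cycle, mul_eq_one_comm.mp hQ, one_mul]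

lemma abs_dotProduct_mulVec_le (C : Matrix (Fin n) (Fin n) ℝ) {v : Fin n → ℝ}
    (hv : v ⬝ᵥ v = 1) : |v ⬝ᵥ (C *ᵥ v)| ≤ ∑ i, ∑ j, |C i j| := by
  have hv_le : ∀ i, |v i| ≤ 1 := fun i => abs_le_one_iff_mul_self_le_one.mpr <|
    hv ▸ Finset.single_le_sum (fun j _ => mul_self_nonneg (v j)) (Finset.mem_univ i)
  have hterm : ∀ i j, |v i * (C i j * v j)| ≤ |C i j| := fun i j => by
    rw [abs_mul, abs_mul, mul_left_comm]
    exact mul_le_of_le_one_right (abs_nonneg _)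
      (mul_le_one₀ (hv_le i) (abs_nonneg _) (hv_le j))
  calc |v ⬝ᵥ (C *ᵥ v)| = |∑ i, ∑ j, v i * (C i j * v j)| := by
        simp only [dotProduct, mulVec, Finset.mul_sum]
    _ ≤ ∑ i, ∑ j, |v i * (C i j * v j)| :=
        (Finset.abs_sum_le_sum_abs _ _).trans
          (Finset.sum_le_sum fun i _ => Finset.abs_sum_le_sum_abs _ _)
    _ ≤ ∑ i, ∑ j, |C i j| := Finset.sum_le_sum fun i _ => Finset.sum_le_sum fun j _ => hterm i j

lemma lambdaMin_le_lambdaMin_add_sum_abs_sub (A B : SymSpace n) :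
    lambdaMin A ≤ lambdaMin B
      + ∑ i, ∑ j, |((A : Matrix (Fin n) (Fin n) ℝ) - (B : Matrix (Fin n) (Fin n) ℝ)) i j| := by
  refine lambdaMin_le_lambdaMin_add_of_forall
    (Finset.sum_nonneg fun _ _ => Finset.sum_nonneg fun _ _ => abs_nonneg _) fun v hv => ?_
  have hAv : v ⬝ᵥ ((A : Matrix (Fin n) (Fin n) ℝ) *ᵥ v)
      = v ⬝ᵥ ((B : Matrix (Fin n) (Fin n) ℝ) *ᵥ v)
        + v ⬝ᵥ (((A : Matrix (Fin n) (Fin n) ℝ) - (B : Matrix (Fin n) (Fin n) ℝ)) *ᵥ v) := by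
    rw [sub_mulVec, dotProduct_sub]; ring
  linarith [lambdaMin_le_dotProduct_mulVec A hv,
    (abs_le.mp (abs_dotProduct_mulVec_le
      ((A : Matrix (Fin n) (Fin n) ℝ) - (B : Matrix (Fin n) (Fin n) ℝ)) hv)).2]

lemma abs_lambdaMin_sub_le (A B : SymSpace n) :
    |lambdaMin A - lambdaMin B|
      ≤ ∑ i, ∑ j, |((A : Matrix (Fin n) (Fin n) ℝ) - (B : Matrix (Fin n) (Fin n) ℝ)) i j| := by
  have hsymm : ∑ i, ∑ j, |((B : Matrix (Fin n) (Fin n) ℝ) - (A : Matrix (Fin n) (Fin n) ℝ)) i j|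
      = ∑ i, ∑ j, |((A : Matrix (Fin n) (Fin n) ℝ) - (B : Matrix (Fin n) (Fin n) ℝ)) i j| := by
    simp only [Matrix.sub_apply, abs_sub_comm]
  rw [abs_sub_le_iff]
  constructor <;> linarith [lambdaMin_le_lambdaMin_add_sum_abs_sub A B,
    lambdaMin_le_lambdaMin_add_sum_abs_sub B A]

lemma continuous_lambdaMin : Continuous (lambdaMin : SymSpace n → ℝ) := by
  refine continuous_iff_continuousAt.mpr fun A₀ => tendsto_iff_norm_sub_tendsto_zero.mpr ?_
  refine squeeze_zero (fun _ => norm_nonneg _) (fun A => abs_lambdaMin_sub_le A A₀) ?_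
  have hcont : Continuous fun A : SymSpace n =>
      ∑ i, ∑ j, |((A : Matrix (Fin n) (Fin n) ℝ) - (A₀ : Matrix (Fin n) (Fin n) ℝ)) i j| := by
    fun_prop
  simpa using hcont.tendsto A₀

lemma continuous_trace : Continuous fun A : SymSpace n => (A : Matrix (Fin n) (Fin n) ℝ).trace :=
  continuous_subtype_val.matrix_trace

end SymSpace

section Mset

open SymSpace

variable {n : ℕ} {g : ℝ → ℝ}

lemma isClosed_Mset (hg : ContinuousOn g (Set.Ici 0)) : IsClosed (Mset n g) := by
  have hMset : Mset n g = {A : SymSpace n | 0 ≤ (A : Matrix (Fin n) (Fin n) ℝ).trace} ∩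
      (fun A => lambdaMin A - g (A : Matrix (Fin n) (Fin n) ℝ).trace) ⁻¹' Set.Ici 0 := by
    ext A; simp [Mset]
  rw [hMset]
  exact (continuous_lambdaMin.continuousOn.sub (hg.comp continuous_trace.continuousOn fun _ h => h))
    |>.preimage_isClosed_of_isClosed (isClosed_Ici.preimage continuous_trace) isClosed_Ici

lemma Mset_add_PSDcone_subset (hg : AntitoneOn g (Set.Ici 0)) :
    Mset n g + PSDcone n ⊆ Mset n g := by
  rintro _ ⟨A, ⟨hA_tr, hA_min⟩, B, hB, rfl⟩
  have hB_tr : 0 ≤ (B : Matrix (Fin n) (Fin n) ℝ).trace := PosSemidef.trace_nonneg hB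
  have htr : ((A + B : SymSpace n) : Matrix (Fin n) (Fin n) ℝ).trace
      = (A : Matrix (Fin n) (Fin n) ℝ).trace + (B : Matrix (Fin n) (Fin n) ℝ).trace :=
    trace_add _ _
  refine ⟨htr ▸ add_nonneg hA_tr hB_tr, ?_⟩
  calc g ((A + B : SymSpace n) : Matrix (Fin n) (Fin n) ℝ).trace
      ≤ g (A : Matrix (Fin n) (Fin n) ℝ).trace :=
        htr ▸ hg hA_tr (add_nonneg hA_tr hB_tr) (le_add_of_nonneg_right hB_tr)
    _ ≤ lambdaMin A := hA_min
    _ ≤ lambdaMin (A + B) := lambdaMin_le_lambdaMin_add A hB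

lemma mem_Mset_iff_of_conj {A B : SymSpace n} {Q : Matrix (Fin n) (Fin n) ℝ} (hQ : Qᵀ * Q = 1)
    (hB : (B : Matrix (Fin n) (Fin n) ℝ) = Qᵀ * (A : Matrix (Fin n) (Fin n) ℝ) * Q) :
    A ∈ Mset n g ↔ B ∈ Mset n g := by
  simp only [Mset, Set.mem_ofPred_eq, lambdaMin_eq_of_conj hQ hB, trace_eq_of_conj hQ hB]

lemma Mset_inter_trace_eq_zero (hg : g 0 = 0) :
    Mset n g ∩ {A : SymSpace n | (A : Matrix (Fin n) (Fin n) ℝ).trace = 0} = {0} := by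
  ext A
  simp only [Mset, Set.mem_inter_iff, Set.mem_ofPred_eq, Set.mem_singleton_iff]
  constructor
  · rintro ⟨⟨-, hmin⟩, htr⟩
    rw [htr, hg, ← posSemidef_iff_lambdaMin_nonneg] at hmin
    exact Subtype.ext ((hmin.trace_eq_zero_iff).mp htr)
  · rintro rfl
    have hmin := (posSemidef_iff_lambdaMin_nonneg (0 : SymSpace n)).mp PosSemidef.zero
    simp_all

lemma PSDcone_diff_zero_subset_interior_Mset (hg_cont : ContinuousOn g (Set.Ici 0))
    (hg_neg : ∀ x : ℝ, 0 < x → g x < 0) : PSDcone n \ {0} ⊆ interior (Mset n g) := by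
  rintro A ⟨hA, hA0 : A ≠ 0⟩
  have hA : (A : Matrix (Fin n) (Fin n) ℝ).PosSemidef := hA
  have htr : 0 < (A : Matrix (Fin n) (Fin n) ℝ).trace :=
    hA.trace_nonneg.lt_of_ne' fun h => hA0 (Subtype.ext (hA.trace_eq_zero_iff.mp h))
  set U : Set (SymSpace n) :=
    {X | 0 < (X : Matrix (Fin n) (Fin n) ℝ).trace} ∩
      (fun X => lambdaMin X - g (X : Matrix (Fin n) (Fin n) ℝ).trace) ⁻¹' Set.Ioi 0
  have hU_open : IsOpen U :=
    (continuous_lambdaMin.continuousOn.sub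
      (hg_cont.comp continuous_trace.continuousOn fun _ h => le_of_lt h)).isOpen_inter_preimage
      (isOpen_Ioi.preimage continuous_trace) isOpen_Ioi
  have hU_sub : U ⊆ Mset n g := fun X ⟨hX_tr, hX_min⟩ =>
    ⟨le_of_lt hX_tr, le_of_lt (sub_pos.mp hX_min)⟩
  have hAU : A ∈ U :=
    ⟨htr, sub_pos.mpr ((hg_neg _ htr).trans_le ((posSemidef_iff_lambdaMin_nonneg A).mp hA))⟩
  exact interior_maximal hU_sub hU_open hAU

end Mset

/-- For `g : [0,∞) → ℝ` continuous, decreasing, with `g(0) = 0` and `g < 0` on `(0,∞)`,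
the set `M(g)` is closed, satisfies positivity `M(g) + P ⊆ M(g)`, is invariant under
orthogonal conjugation, meets `{tr = 0}` only at `0`, and contains `P − {0}` in its
interior. -/
theorem Mg_subequation (n : ℕ) (g : ℝ → ℝ)
    (hg_cont : ContinuousOn g (Set.Ici 0))
    (hg_anti : AntitoneOn g (Set.Ici 0))
    (hg0 : g 0 = 0) (hg_neg : ∀ x : ℝ, 0 < x → g x < 0) :
    IsClosed (Mset n g) ∧
    Mset n g + PSDcone n ⊆ Mset n g ∧
    (∀ (A B : SymSpace n) (Q : Matrix (Fin n) (Fin n) ℝ), Qᵀ * Q = 1 →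
      (B : Matrix (Fin n) (Fin n) ℝ) = Qᵀ * (A : Matrix (Fin n) (Fin n) ℝ) * Q →
        (A ∈ Mset n g ↔ B ∈ Mset n g)) ∧
    Mset n g ∩ {A : SymSpace n | (A : Matrix (Fin n) (Fin n) ℝ).trace = 0} = {0} ∧
    PSDcone n \ {0} ⊆ interior (Mset n g) :=
  ⟨isClosed_Mset hg_cont, Mset_add_PSDcone_subset hg_anti,
    fun _ _ _ hQ hB => mem_Mset_iff_of_conj hQ hB, Mset_inter_trace_eq_zero hg0,
    PSDcone_diff_zero_subset_interior_Mset hg_cont hg_neg⟩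
end

section
/- Let g be concave and decreasing on [0,a] with g(0) = 0, extended to [0,∞) by g(x) := n·g(a) + g(x − n·a) for n·a ≤ x ≤ (n+1)·a (n ∈ ℕ). Then the extension is subadditive on [0,∞), and it dominates every other subadditive function h on [0,∞) that agrees with g on [0,a]. -/
/-!
On each block `[n a, (n+1) a]` the extension `G` is `n g(a)` plus a translate of `g`. Writing
`x = m a + u`, `y = n a + v` with `u, v ∈ [0, a]`, subadditivity of `G` reduces to
`g(u + v) ≤ g u + g v` when `u + v ≤ a`, and to `g a + g(u + v - a) ≤ g u + g v` otherwise. Both are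
instances of one fact about a concave function: moving two points with fixed sum apart towards the
ends of an interval can only decrease `f u + f v`. Maximality is induction over the blocks, using
`h(x + a) ≤ h x + h a`.
-/

open Set

theorem ConcaveOn.map_add_map_le_of_mem_Icc {s : Set ℝ} {f : ℝ → ℝ} (hf : ConcaveOn ℝ s f)
    {w z u v : ℝ} (hw : w ∈ s) (hz : z ∈ s) (hu : u ∈ Icc w z) (hv : v ∈ Icc w z)
    (huv : u + v = w + z) : f w + f z ≤ f u + f v := by
  obtain ⟨hwu, huz⟩ := hu
  rcases (hwu.trans huz).eq_or_lt with rfl | hwz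
  · obtain rfl : u = w := le_antisymm huz hwu
    obtain rfl : v = u := by linarith
    rfl
  set θ := (z - u) / (z - w)
  have hzw : z - w ≠ 0 := (sub_pos.2 hwz).ne'
  have hθ0 : 0 ≤ θ := div_nonneg (by linarith) (by linarith)
  have hθ1 : 0 ≤ 1 - θ := sub_nonneg.2 (div_le_one_of_le₀ (by linarith) (by linarith))
  have hθ_mul : θ * (z - w) = z - u := div_mul_cancel₀ _ hzw
  have hfu : θ * f w + (1 - θ) * f z ≤ f u := by
    have hu_eq : θ * w + (1 - θ) * z = u := by linear_combination -hθ_mul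
    simpa only [smul_eq_mul, hu_eq] using hf.2 hw hz hθ0 hθ1 (by ring)
  have hfv : (1 - θ) * f w + θ * f z ≤ f v := by
    have hv_eq : (1 - θ) * w + θ * z = v := by linear_combination hθ_mul - huv
    simpa only [smul_eq_mul, hv_eq] using hf.2 hw hz hθ1 hθ0 (by ring)
  linarith

theorem ConcaveOn.map_add_le_of_map_zero {s : Set ℝ} {f : ℝ → ℝ} (hf : ConcaveOn ℝ s f)
    (hf0 : f 0 = 0) (h0 : 0 ∈ s) {u v : ℝ} (hu : 0 ≤ u) (hv : 0 ≤ v) (huv : u + v ∈ s) :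
    f (u + v) ≤ f u + f v := by
  simpa [hf0] using hf.map_add_map_le_of_mem_Icc h0 huv ⟨hu, le_add_of_nonneg_right hv⟩
    ⟨hv, le_add_of_nonneg_left hu⟩ (zero_add _).symm

theorem exists_nat_mul_add_mem_Icc {a x : ℝ} (ha : 0 < a) (hx : 0 ≤ x) :
    ∃ n : ℕ, ∃ u ∈ Icc 0 a, x = n * a + u := by
  refine ⟨⌊x / a⌋₊, x - ⌊x / a⌋₊ * a, ⟨?_, ?_⟩, by ring⟩
  · have := (le_div_iff₀ ha).1 (Nat.floor_le (div_nonneg hx ha.le))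
    linarith
  · have := (div_lt_iff₀ ha).1 (Nat.lt_floor_add_one (x / a))
    linarith

theorem le_nat_mul_add_of_map_add_le {h : ℝ → ℝ} {a : ℝ} (ha : 0 ≤ a)
    (hsub : ∀ x, 0 ≤ x → h (x + a) ≤ h x + h a) (n : ℕ) {u : ℝ} (hu : 0 ≤ u) :
    h (n * a + u) ≤ n * h a + h u := by
  induction n with
  | zero => simp
  | succ n ih =>
    calc h ((n + 1 : ℕ) * a + u) = h ((n * a + u) + a) := by push_cast; ring_nf
      _ ≤ h (n * a + u) + h a := hsub _ (by positivity)
      _ ≤ (n + 1 : ℕ) * h a + h u := by push_cast; linarith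

def IsBlockExtension (a : ℝ) (g G : ℝ → ℝ) : Prop :=
  ∀ n : ℕ, ∀ x ∈ Icc ((n : ℝ) * a) ((n + 1) * a), G x = n * g a + g (x - n * a)

namespace IsBlockExtension

variable {a : ℝ} {g G : ℝ → ℝ}

theorem apply_nat_mul_add (hG : IsBlockExtension a g G) (n : ℕ) {u : ℝ} (hu : u ∈ Icc 0 a) :
    G (n * a + u) = n * g a + g u := by
  rw [hG n _ ⟨by linarith [hu.1], by linarith [hu.2]⟩, add_sub_cancel_left]

theorem map_add_le (hG : IsBlockExtension a g G) (ha : 0 < a)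
    (hconc : ConcaveOn ℝ (Icc 0 a) g) (hg0 : g 0 = 0) {x y : ℝ} (hx : 0 ≤ x) (hy : 0 ≤ y) :
    G (x + y) ≤ G x + G y := by
  obtain ⟨m, u, hu, rfl⟩ := exists_nat_mul_add_mem_Icc ha hx
  obtain ⟨n, v, hv, rfl⟩ := exists_nat_mul_add_mem_Icc ha hy
  rw [hG.apply_nat_mul_add m hu, hG.apply_nat_mul_add n hv]
  rcases le_total (u + v) a with huv | huv
  · have hsum : G (m * a + u + (n * a + v)) = (m + n : ℕ) * g a + g (u + v) := by
      rw [← hG.apply_nat_mul_add (m + n) ⟨add_nonneg hu.1 hv.1, huv⟩]; push_cast; ring_nf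
    have := hconc.map_add_le_of_map_zero hg0 ⟨le_rfl, ha.le⟩ hu.1 hv.1 ⟨add_nonneg hu.1 hv.1, huv⟩
    rw [hsum]; push_cast; linarith
  · have hsum : G (m * a + u + (n * a + v)) = (m + n + 1 : ℕ) * g a + g (u + v - a) := by
      rw [← hG.apply_nat_mul_add (m + n + 1) ⟨by linarith, by linarith [hu.2, hv.2]⟩]
      push_cast; ring_nf
    have := hconc.map_add_map_le_of_mem_Icc (w := u + v - a) (u := u) (v := v)
      ⟨by linarith, by linarith [hu.2, hv.2]⟩ ⟨ha.le, le_rfl⟩ ⟨by linarith [hv.2], hu.2⟩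
      ⟨by linarith [hu.2], hv.2⟩ (by ring)
    rw [hsum]; push_cast; linarith

end IsBlockExtension

theorem bruckner_extension_general (a : ℝ) (ha : 0 < a) (g G : ℝ → ℝ)
    (hconc : ConcaveOn ℝ (Set.Icc 0 a) g)
    (hg0 : g 0 = 0)
    (hG : ∀ n : ℕ, ∀ x ∈ Set.Icc ((n : ℝ) * a) (((n : ℝ) + 1) * a),
      G x = (n : ℝ) * g a + g (x - (n : ℝ) * a)) :
    (∀ x : ℝ, 0 ≤ x → ∀ y : ℝ, 0 ≤ y → G (x + y) ≤ G x + G y) ∧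
    ∀ h : ℝ → ℝ,
      (∀ x : ℝ, 0 ≤ x → ∀ y : ℝ, 0 ≤ y → h (x + y) ≤ h x + h y) →
      (∀ x ∈ Set.Icc (0 : ℝ) a, h x = g x) →
      ∀ x : ℝ, 0 ≤ x → h x ≤ G x := by
  have hG' : IsBlockExtension a g G := hG
  refine ⟨fun x hx y hy => hG'.map_add_le ha hconc hg0 hx hy, fun h hsub hag x hx => ?_⟩
  obtain ⟨n, u, hu, rfl⟩ := exists_nat_mul_add_mem_Icc ha hx
  calc h (n * a + u) ≤ n * h a + h u :=
        le_nat_mul_add_of_map_add_le ha.le (fun x hx => hsub x hx a ha.le) n hu.1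
    _ = G (n * a + u) := by
        rw [hG'.apply_nat_mul_add n hu, hag a ⟨ha.le, le_rfl⟩, hag u hu]

/-- Bruckner's extension: if `g` is concave and decreasing on `[0,a]` with `g(0) = 0`, and `G`
extends `g` to `[0,∞)` by `G(x) = n·g(a) + g(x − n·a)` for `n·a ≤ x ≤ (n+1)·a`, then `G` is
subadditive on `[0,∞)` and dominates every subadditive function `h` on `[0,∞)` agreeing with
`g` on `[0,a]`. -/
theorem bruckner_extension (a : ℝ) (ha : 0 < a) (g G : ℝ → ℝ)
    (hconc : ConcaveOn ℝ (Set.Icc 0 a) g)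
    (hanti : AntitoneOn g (Set.Icc 0 a))
    (hg0 : g 0 = 0)
    (hG : ∀ n : ℕ, ∀ x ∈ Set.Icc ((n : ℝ) * a) (((n : ℝ) + 1) * a),
      G x = (n : ℝ) * g a + g (x - (n : ℝ) * a)) :
    (∀ x : ℝ, 0 ≤ x → ∀ y : ℝ, 0 ≤ y → G (x + y) ≤ G x + G y) ∧
    ∀ h : ℝ → ℝ,
      (∀ x : ℝ, 0 ≤ x → ∀ y : ℝ, 0 ≤ y → h (x + y) ≤ h x + h y) →
      (∀ x ∈ Set.Icc (0 : ℝ) a, h x = g x) →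
      ∀ x : ℝ, 0 ≤ x → h x ≤ G x :=
  bruckner_extension_general a ha g G hconc hg0 hG
end

section
/- Let u: U → ℝ ∪ {−∞} be upper semi-continuous on a neighborhood U of z₀ = 0 in ℝᵏ × ℝˡ, depending only on the first variable t (u(t,y) = u(t)), with u(0) = 0, and let φ(z) = ⟨p,t⟩ + ⟨q,y⟩ + ⟨At,t⟩ + 2⟨Bt,y⟩ + ⟨Cy,y⟩ be a quadratic polynomial with φ(0)=0 and u(t) < φ(t,y) for all (t,y) ≠ (0,0) in U. Then q = 0, C is positive definite, and the quadratic polynomial φ̄(t) := ⟨p,t⟩ + ⟨(A − BᵀC⁻¹B)t, t⟩ satisfies u(t) ≤ φ̄(t) ≤ φ(t,y) for (t,y) near 0. -/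
/-
Restricting the domination to the ray `ε ↦ (0, εy)` and using `u 0 = 0` gives
`0 < ε⟨q,y⟩ + ε²⟨Cy,y⟩` for all small `ε > 0`; hence `⟨q,y⟩ ≥ 0` for every `y`, so `q = 0`,
and then `⟨Cy,y⟩ > 0`. Once `q = 0`, completing the square in `y` gives
`φ(t,y) = φ̄(t) + ⟨C(y + C⁻¹Bt), y + C⁻¹Bt⟩`, so `φ̄ ≤ φ`, and evaluating the domination on the
graph `y = -C⁻¹Bt`, where `φ = φ̄`, gives `u ≤ φ̄`.
-/

open Filter Topology Matrix

section Algebra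

variable {R : Type*} [CommRing R] {m n : Type*} [Fintype m] [Fintype n]

def quadPoly (p : m → R) (q : n → R) (A : Matrix m m R) (B : Matrix n m R)
    (C : Matrix n n R) (z : (m → R) × (n → R)) : R :=
  p ⬝ᵥ z.1 + q ⬝ᵥ z.2 + z.1 ⬝ᵥ A *ᵥ z.1 + 2 * (B *ᵥ z.1 ⬝ᵥ z.2) + z.2 ⬝ᵥ C *ᵥ z.2

/-- The paper's `φ̄`: `A - BᵀC⁻¹B` is the Schur complement of `C` in the block matrix of the
quadratic part of `quadPoly`. -/
noncomputable def schurPoly [DecidableEq n] (p : m → R) (A : Matrix m m R)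
    (B : Matrix n m R) (C : Matrix n n R) (t : m → R) : R :=
  p ⬝ᵥ t + t ⬝ᵥ (A - Bᵀ * C⁻¹ * B) *ᵥ t

theorem quadPoly_zero_fst_smul (p : m → R) (q : n → R) (A : Matrix m m R) (B : Matrix n m R)
    (C : Matrix n n R) (y : n → R) (ε : R) :
    quadPoly p q A B C (0, ε • y) = (q ⬝ᵥ y) * ε + (y ⬝ᵥ C *ᵥ y) * ε ^ 2 := by
  simp only [quadPoly, mulVec_zero, mulVec_smul, dotProduct_zero, zero_dotProduct,
    dotProduct_smul, smul_dotProduct, smul_eq_mul]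
  ring

variable [StarRing R] [TrivialStar R]

theorem quadPoly_zero_eq_dotProduct_fromBlocks (p : m → R) (A : Matrix m m R)
    (B : Matrix n m R) (C : Matrix n n R) (t : m → R) (y : n → R) :
    quadPoly p 0 A B C (t, y) = p ⬝ᵥ t + star (y ⊕ᵥ t) ᵥ* fromBlocks C B Bᴴ A ⬝ᵥ (y ⊕ᵥ t) := by
  have hB : y ᵥ* B ⬝ᵥ t = B *ᵥ t ⬝ᵥ y := by rw [← dotProduct_mulVec, dotProduct_comm]
  simp only [quadPoly, star_trivial, vecMul_fromBlocks, Sum.elim_comp_inl, Sum.elim_comp_inr,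
    conjTranspose_eq_transpose_of_trivial, vecMul_transpose, sumElim_dotProduct_sumElim,
    add_dotProduct, ← dotProduct_mulVec, hB, zero_dotProduct]
  ring

variable [DecidableEq n]

theorem quadPoly_zero_eq_schurPoly_add {C : Matrix n n R} [Invertible C] (hC : C.IsSymm)
    (p : m → R) (A : Matrix m m R) (B : Matrix n m R) (t : m → R) (y : n → R) :
    quadPoly p 0 A B C (t, y) =
      schurPoly p A B C t + (y + (C⁻¹ * B) *ᵥ t) ⬝ᵥ C *ᵥ (y + (C⁻¹ * B) *ᵥ t) := by
  rw [quadPoly_zero_eq_dotProduct_fromBlocks,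
    schur_complement_eq₁₁ B A y t (isHermitian_iff_isSymm.mpr hC)]
  simp [schurPoly, dotProduct_mulVec, conjTranspose_eq_transpose_of_trivial]
  ring

theorem quadPoly_zero_mk_neg_mulVec {C : Matrix n n R} [Invertible C] (hC : C.IsSymm)
    (p : m → R) (A : Matrix m m R) (B : Matrix n m R) (t : m → R) :
    quadPoly p 0 A B C (t, -((C⁻¹ * B) *ᵥ t)) = schurPoly p A B C t := by
  simp [quadPoly_zero_eq_schurPoly_add hC]

end Algebra

theorem schurPoly_le_quadPoly {R : Type*} [CommRing R] [PartialOrder R] [IsOrderedRing R]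
    [StarRing R] [TrivialStar R] {m n : Type*} [Fintype m] [Fintype n] [DecidableEq n]
    {C : Matrix n n R} [Invertible C] (hC : C.PosSemidef)
    (p : m → R) (A : Matrix m m R) (B : Matrix n m R) (z : (m → R) × (n → R)) :
    schurPoly p A B C z.1 ≤ quadPoly p 0 A B C z := by
  rw [quadPoly_zero_eq_schurPoly_add (isHermitian_iff_isSymm.mp hC.1)]
  simpa using hC.dotProduct_mulVec_nonneg (z.2 + (C⁻¹ * B) *ᵥ z.1)

theorem nonneg_of_eventually_pos_mul_add_mul_sq {a b : ℝ}
    (h : ∀ᶠ ε in 𝓝[>] (0 : ℝ), 0 < a * ε + b * ε ^ 2) : 0 ≤ a := by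
  have hlim : Tendsto (fun ε => a + b * ε) (𝓝[>] 0) (𝓝 a) :=
    ((continuous_const.add (continuous_const_mul b)).tendsto' 0 a (by simp)).mono_left
      nhdsWithin_le_nhds
  refine ge_of_tendsto hlim ?_
  filter_upwards [h, self_mem_nhdsWithin] with ε hε (hε0 : 0 < ε)
  refine (pos_of_mul_pos_right (a := ε) ?_ hε0.le).le
  linarith

section Domination

variable {m n : Type*} [Fintype m] [Fintype n]
  {U : Set ((m → ℝ) × (n → ℝ))} {u : (m → ℝ) → EReal}
  {p : m → ℝ} {q : n → ℝ} {A : Matrix m m ℝ} {B : Matrix n m ℝ} {C : Matrix n n ℝ}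

theorem eventually_pos_along_ray (hU : U ∈ 𝓝 0) (hu0 : u 0 = 0)
    (hlt : ∀ z ∈ U, z ≠ 0 → u z.1 < ((quadPoly p q A B C z : ℝ) : EReal))
    {y : n → ℝ} (hy : y ≠ 0) :
    ∀ᶠ ε in 𝓝[>] (0 : ℝ), 0 < (q ⬝ᵥ y) * ε + (y ⬝ᵥ C *ᵥ y) * ε ^ 2 := by
  have hray : Tendsto (fun ε : ℝ => ((0 : m → ℝ), ε • y)) (𝓝[>] 0) (𝓝 0) :=
    ((continuous_const.prodMk (continuous_id.smul continuous_const)).tendsto' 0 0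
      (by simp)).mono_left nhdsWithin_le_nhds
  filter_upwards [hray hU, self_mem_nhdsWithin] with ε hεU (hε : 0 < ε)
  have hne : ((0 : m → ℝ), ε • y) ≠ 0 := fun h => smul_ne_zero hε.ne' hy (congrArg Prod.snd h)
  have := hlt _ hεU hne
  rwa [hu0, quadPoly_zero_fst_smul, EReal.coe_pos] at this

theorem eq_zero_of_dominates (hU : U ∈ 𝓝 0) (hu0 : u 0 = 0)
    (hlt : ∀ z ∈ U, z ≠ 0 → u z.1 < ((quadPoly p q A B C z : ℝ) : EReal)) : q = 0 := by
  by_contra hq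
  have hqq_nonpos : q ⬝ᵥ q ≤ 0 := by
    simpa using nonneg_of_eventually_pos_mul_add_mul_sq
      (eventually_pos_along_ray hU hu0 hlt (neg_ne_zero.mpr hq))
  have hqq_nonneg : 0 ≤ q ⬝ᵥ q := by simpa using dotProduct_star_self_nonneg q
  exact hq (dotProduct_self_eq_zero.mp (hqq_nonpos.antisymm hqq_nonneg))

theorem posDef_of_dominates (hU : U ∈ 𝓝 0) (hu0 : u 0 = 0)
    (hlt : ∀ z ∈ U, z ≠ 0 → u z.1 < ((quadPoly p 0 A B C z : ℝ) : EReal)) (hC : C.IsSymm) :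
    C.PosDef := by
  refine .of_dotProduct_mulVec_pos (isHermitian_iff_isSymm.mpr hC) fun y hy => ?_
  obtain ⟨ε, hε⟩ := (eventually_pos_along_ray hU hu0 hlt hy).exists
  rw [zero_dotProduct, zero_mul, zero_add] at hε
  simpa using pos_of_mul_pos_left hε (sq_nonneg ε)

theorem eventually_le_schurPoly [DecidableEq n] [Invertible C] (hC : C.IsSymm)
    (hU : U ∈ 𝓝 0) (hu0 : u 0 = 0)
    (hlt : ∀ z ∈ U, z ≠ 0 → u z.1 < ((quadPoly p 0 A B C z : ℝ) : EReal)) :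
    ∀ᶠ t in 𝓝 0, u t ≤ ((schurPoly p A B C t : ℝ) : EReal) := by
  have hgraph : Tendsto (fun t : m → ℝ => (t, -((C⁻¹ * B) *ᵥ t))) (𝓝 0) (𝓝 0) :=
    (continuous_id.prodMk (C⁻¹ * B).mulVecLin.continuous_of_finiteDimensional.neg).tendsto' 0 0
      (by simp)
  filter_upwards [hgraph hU] with t ht
  rcases eq_or_ne t 0 with rfl | ht0
  · simp [hu0, schurPoly]
  · have := hlt _ ht fun h => ht0 (congrArg Prod.fst h)
    exact (quadPoly_zero_mk_neg_mulVec hC p A B t ▸ this).le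

end Domination

theorem quadratic_radial_test_function_general (k l : ℕ)
    (U : Set ((Fin k → ℝ) × (Fin l → ℝ)))
    (hU : U ∈ nhds (0 : (Fin k → ℝ) × (Fin l → ℝ)))
    (u : (Fin k → ℝ) → EReal) (hu0 : u 0 = 0)
    (p : Fin k → ℝ) (q : Fin l → ℝ)
    (A : Matrix (Fin k) (Fin k) ℝ)
    (C : Matrix (Fin l) (Fin l) ℝ) (hC : C.IsSymm)
    (B : Matrix (Fin l) (Fin k) ℝ)
    (hlt : ∀ z ∈ U, z ≠ 0 →
      u z.1 < ((p ⬝ᵥ z.1 + q ⬝ᵥ z.2 + z.1 ⬝ᵥ A.mulVec z.1 +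
        2 * (B.mulVec z.1 ⬝ᵥ z.2) + z.2 ⬝ᵥ C.mulVec z.2 : ℝ) : EReal)) :
    q = 0 ∧ C.PosDef ∧
      ∀ᶠ z : (Fin k → ℝ) × (Fin l → ℝ) in nhds 0,
        u z.1 ≤ ((p ⬝ᵥ z.1 + z.1 ⬝ᵥ (A - Bᵀ * C⁻¹ * B).mulVec z.1 : ℝ) : EReal) ∧
        (p ⬝ᵥ z.1 + z.1 ⬝ᵥ (A - Bᵀ * C⁻¹ * B).mulVec z.1 : ℝ) ≤
          p ⬝ᵥ z.1 + q ⬝ᵥ z.2 + z.1 ⬝ᵥ A.mulVec z.1 +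
            2 * (B.mulVec z.1 ⬝ᵥ z.2) + z.2 ⬝ᵥ C.mulVec z.2 := by
  obtain rfl : q = 0 := eq_zero_of_dominates hU hu0 hlt
  have hCpos : C.PosDef := posDef_of_dominates hU hu0 hlt hC
  have := hCpos.isUnit.invertible
  refine ⟨rfl, hCpos, ?_⟩
  have hfst : Tendsto Prod.fst (𝓝 (0 : (Fin k → ℝ) × (Fin l → ℝ))) (𝓝 0) :=
    continuous_fst.tendsto' _ _ rfl
  filter_upwards [hfst.eventually (eventually_le_schurPoly hC hU hu0 hlt)] with z hz
  exact ⟨hz, schurPoly_le_quadPoly hCpos.posSemidef p A B z⟩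

/-- Lemma A.2: if `u = u(t)` is upper semi-continuous with `u(0) = 0` and the quadratic
polynomial `φ(t,y) = ⟨p,t⟩ + ⟨q,y⟩ + ⟨At,t⟩ + 2⟨Bt,y⟩ + ⟨Cy,y⟩` strictly dominates `u` off
the origin on a neighborhood `U` of `0`, then `q = 0`, `C` is positive definite, and
`φ̄(t) = ⟨p,t⟩ + ⟨(A − BᵀC⁻¹B)t,t⟩` squeezes between `u` and `φ` near `0`. -/
theorem quadratic_radial_test_function (k l : ℕ)
    (U : Set ((Fin k → ℝ) × (Fin l → ℝ)))
    (hU : U ∈ nhds (0 : (Fin k → ℝ) × (Fin l → ℝ)))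
    (u : (Fin k → ℝ) → EReal) (husc : UpperSemicontinuous u) (hu0 : u 0 = 0)
    (p : Fin k → ℝ) (q : Fin l → ℝ)
    (A : Matrix (Fin k) (Fin k) ℝ) (hA : A.IsSymm)
    (C : Matrix (Fin l) (Fin l) ℝ) (hC : C.IsSymm)
    (B : Matrix (Fin l) (Fin k) ℝ)
    (hlt : ∀ z ∈ U, z ≠ 0 →
      u z.1 < ((p ⬝ᵥ z.1 + q ⬝ᵥ z.2 + z.1 ⬝ᵥ A.mulVec z.1 +
        2 * (B.mulVec z.1 ⬝ᵥ z.2) + z.2 ⬝ᵥ C.mulVec z.2 : ℝ) : EReal)) :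
    q = 0 ∧ C.PosDef ∧
      ∀ᶠ z : (Fin k → ℝ) × (Fin l → ℝ) in nhds 0,
        u z.1 ≤ ((p ⬝ᵥ z.1 + z.1 ⬝ᵥ (A - Bᵀ * C⁻¹ * B).mulVec z.1 : ℝ) : EReal) ∧
        (p ⬝ᵥ z.1 + z.1 ⬝ᵥ (A - Bᵀ * C⁻¹ * B).mulVec z.1 : ℝ) ≤
          p ⬝ᵥ z.1 + q ⬝ᵥ z.2 + z.1 ⬝ᵥ A.mulVec z.1 +
            2 * (B.mulVec z.1 ⬝ᵥ z.2) + z.2 ⬝ᵥ C.mulVec z.2 :=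
  quadratic_radial_test_function_general k l U hU u hu0 p q A C hC B hlt
end

section
/- Let f: [0,∞) → [0,∞] be upper semi-continuous and increasing with f(0)=0. Define F_f^{min/max} := {A ∈ Sym(n) : λ_max(A) ≥ 0 and λ_min(A) + f(λ_max(A)) ≥ 0}. Then F_f^{min/max} is closed, satisfies positivity (F + P ⊆ F), is invariant under orthogonal conjugation, and is borderline, i.e., F_f^{min/max} ∩ (−P) = {0}. -/
open Pointwise Matrix
open scoped ENNReal

/-- The min/max subequation `F_f^{min/max} = {A : λ_max(A) ≥ 0 ∧ λ_min(A) + f(λ_max(A)) ≥ 0}`. -/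
noncomputable def FminMax (n : ℕ) (f : ℝ → ℝ≥0∞) : Set (SymSpace n) :=
  {A | 0 ≤ lambdaMax A ∧
       (0 : EReal) ≤ (lambdaMin A : EReal) + ((f (lambdaMax A) : ℝ≥0∞) : EReal)}

/-!
`λ_max(A)` and `λ_min(A)` are the maximum and minimum of the quadratic form `x ↦ ⟪x, A x⟫` on
the unit sphere. As the sphere is compact, both are continuous in `A`; they increase when a
positive semidefinite matrix is added; and they are unchanged under `A ↦ Qᵀ A Q` for orthogonal
`Q`, which permutes the sphere. Membership in `F_f^{min/max}` says that
`(λ_max(A), (-λ_min(A))⁺)` lies in the hypograph of `f` over `[0, ∞)`, which is closed because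
`f` is upper semicontinuous. Finally, if `-A ≥ 0` and `A ∈ F_f^{min/max}`, then `λ_max(A) = 0`,
so `f(0) = 0` forces `λ_min(A) ≥ 0` and all eigenvalues of `A` vanish.
-/

open scoped RealInnerProductSpace

lemma csSup_image_le_csSup_image {α β : Type*} [ConditionallyCompleteLattice α] {s : Set β}
    {g h : β → α} (hh : BddAbove (h '' s)) (hgh : ∀ x ∈ s, g x ≤ h x) :
    sSup (g '' s) ≤ sSup (h '' s) := by
  rcases s.eq_empty_or_nonempty with rfl | hs
  · simp
  · exact csSup_le (hs.image g) <| Set.forall_mem_image.2 fun x hx =>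
      (hgh x hx).trans (le_csSup hh (Set.mem_image_of_mem h hx))

lemma csInf_image_le_csInf_image {α β : Type*} [ConditionallyCompleteLattice α] {s : Set β}
    {g h : β → α} (hg : BddBelow (g '' s)) (hgh : ∀ x ∈ s, g x ≤ h x) :
    sInf (g '' s) ≤ sInf (h '' s) :=
  csSup_image_le_csSup_image (α := αᵒᵈ) hg hgh

lemma EReal.zero_le_coe_add_coe_ennreal_iff (a : ℝ) (b : ℝ≥0∞) :
    (0 : EReal) ≤ a + b ↔ ENNReal.ofReal (-a) ≤ b := by
  induction b using ENNReal.recTopCoe with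
  | top => simp
  | coe r =>
    rw [EReal.coe_nnreal_eq_coe_real, ← EReal.coe_add, EReal.coe_nonneg,
      ENNReal.ofReal_le_iff_le_toReal ENNReal.coe_ne_top, ENNReal.coe_toReal]
    constructor <;> intro h <;> linarith

namespace Matrix

variable {ι : Type*} [Fintype ι] [DecidableEq ι]

noncomputable def numericalRange (A : Matrix ι ι ℝ) : Set ℝ :=
  (fun x : EuclideanSpace ℝ ι => ⟪x, toEuclideanLin A x⟫) '' Metric.sphere 0 1

lemma continuous_inner_toEuclideanLin_self :
    Continuous fun p : Matrix ι ι ℝ × EuclideanSpace ℝ ι => ⟪p.2, toEuclideanLin p.1 p.2⟫ := by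
  simp only [toLpLin_apply]
  fun_prop

lemma isCompact_numericalRange (A : Matrix ι ι ℝ) : IsCompact (numericalRange A) :=
  (isCompact_sphere 0 1).image <|
    continuous_inner_toEuclideanLin_self.comp₂ continuous_const continuous_id

lemma numericalRange_of_isEmpty [IsEmpty ι] (A : Matrix ι ι ℝ) : numericalRange A = ∅ := by
  refine Set.image_eq_empty.2 (Set.eq_empty_of_forall_notMem fun x hx => ?_)
  rw [mem_sphere_zero_iff_norm, Subsingleton.elim x 0, norm_zero] at hx
  exact zero_ne_one hx

lemma inner_toEuclideanLin_self_le_add (A : Matrix ι ι ℝ) {Q : Matrix ι ι ℝ} (hQ : Q.PosSemidef)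
    (x : EuclideanSpace ℝ ι) : ⟪x, toEuclideanLin A x⟫ ≤ ⟪x, toEuclideanLin (A + Q) x⟫ := by
  have hQx := (isPositive_toEuclideanLin_iff.2 hQ).re_inner_nonneg_right x
  rw [map_add, LinearMap.add_apply, inner_add_right]
  simpa using hQx

lemma inner_toEuclideanLin_transpose_mul_mul (A Q : Matrix ι ι ℝ) (x : EuclideanSpace ℝ ι) :
    ⟪x, toEuclideanLin (Qᵀ * A * Q) x⟫
      = ⟪toEuclideanLin Q x, toEuclideanLin A (toEuclideanLin Q x)⟫ := by
  rw [← conjTranspose_eq_transpose_of_trivial, toLpLin_mul_same, toLpLin_mul_same,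
    toEuclideanLin_conjTranspose_eq_adjoint]
  simp [LinearMap.adjoint_inner_right]

lemma numericalRange_transpose_mul_mul_subset {Q : Matrix ι ι ℝ} (hQ : Qᵀ * Q = 1)
    (A : Matrix ι ι ℝ) : numericalRange (Qᵀ * A * Q) ⊆ numericalRange A := by
  rintro _ ⟨x, hx, rfl⟩
  refine ⟨toEuclideanLin Q x, ?_, (inner_toEuclideanLin_transpose_mul_mul A Q x).symm⟩
  have hnorm := inner_toEuclideanLin_transpose_mul_mul 1 Q x
  simp only [Matrix.mul_one, hQ, toLpLin_one, LinearMap.id_apply,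
    real_inner_self_eq_norm_sq] at hnorm
  rw [mem_sphere_zero_iff_norm] at hx ⊢
  nlinarith [norm_nonneg (toEuclideanLin Q x)]

lemma numericalRange_transpose_mul_mul {Q : Matrix ι ι ℝ} (hQ : Qᵀ * Q = 1)
    (A : Matrix ι ι ℝ) : numericalRange (Qᵀ * A * Q) = numericalRange A := by
  have hQ' : Qᵀᵀ * Qᵀ = 1 := by rw [transpose_transpose, mul_eq_one_comm, hQ]
  have hA : Qᵀᵀ * (Qᵀ * A * Q) * Qᵀ = A := by
    rw [transpose_transpose, ← Matrix.mul_assoc, ← Matrix.mul_assoc, mul_eq_one_comm.1 hQ,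
      Matrix.one_mul, Matrix.mul_assoc, mul_eq_one_comm.1 hQ, Matrix.mul_one]
  refine (numericalRange_transpose_mul_mul_subset hQ A).antisymm ?_
  simpa only [hA] using numericalRange_transpose_mul_mul_subset hQ' (Qᵀ * A * Q)

namespace IsHermitian

variable {A : Matrix ι ι ℝ} (hA : A.IsHermitian)

lemma toEuclideanLin_eigenvectorBasis (i : ι) :
    toEuclideanLin A (hA.eigenvectorBasis i) = hA.eigenvalues i • hA.eigenvectorBasis i := by
  ext1
  simp [toLpLin_apply, hA.mulVec_eigenvectorBasis]

lemma inner_toEuclideanLin_self (x : EuclideanSpace ℝ ι) :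
    ⟪x, toEuclideanLin A x⟫ = ∑ i, hA.eigenvalues i * ⟪hA.eigenvectorBasis i, x⟫ ^ 2 := by
  rw [← hA.eigenvectorBasis.sum_inner_mul_inner]
  refine Finset.sum_congr rfl fun i _ => ?_
  rw [← isSymmetric_toEuclideanLin_iff.2 hA, hA.toEuclideanLin_eigenvectorBasis,
    real_inner_smul_left, real_inner_comm]
  ring

lemma eigenvalues_mem_numericalRange (i : ι) : hA.eigenvalues i ∈ numericalRange A := by
  refine ⟨hA.eigenvectorBasis i, by simp, ?_⟩
  simp [hA.toEuclideanLin_eigenvectorBasis, real_inner_smul_right]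

lemma isGreatest_numericalRange [Nonempty ι] :
    IsGreatest (numericalRange A) (⨆ i, hA.eigenvalues i) := by
  obtain ⟨i, hi⟩ := exists_eq_ciSup_of_finite (f := hA.eigenvalues)
  refine ⟨hi ▸ hA.eigenvalues_mem_numericalRange i, ?_⟩
  rintro _ ⟨x, hx, rfl⟩
  calc ⟪x, toEuclideanLin A x⟫
      ≤ ∑ j, (⨆ i, hA.eigenvalues i) * ⟪hA.eigenvectorBasis j, x⟫ ^ 2 := by
        rw [hA.inner_toEuclideanLin_self]
        gcongr with j
        exact le_ciSup (Set.finite_range _).bddAbove j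
    _ = ⨆ i, hA.eigenvalues i := by
        rw [← Finset.mul_sum, hA.eigenvectorBasis.sum_sq_inner_right,
          mem_sphere_zero_iff_norm.1 hx, one_pow, mul_one]

lemma isLeast_numericalRange [Nonempty ι] :
    IsLeast (numericalRange A) (⨅ i, hA.eigenvalues i) := by
  obtain ⟨i, hi⟩ := exists_eq_ciInf_of_finite (f := hA.eigenvalues)
  refine ⟨hi ▸ hA.eigenvalues_mem_numericalRange i, ?_⟩
  rintro _ ⟨x, hx, rfl⟩
  calc ⨅ i, hA.eigenvalues i
      = ∑ j, (⨅ i, hA.eigenvalues i) * ⟪hA.eigenvectorBasis j, x⟫ ^ 2 := by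
        rw [← Finset.mul_sum, hA.eigenvectorBasis.sum_sq_inner_right,
          mem_sphere_zero_iff_norm.1 hx, one_pow, mul_one]
    _ ≤ ⟪x, toEuclideanLin A x⟫ := by
        rw [hA.inner_toEuclideanLin_self]
        gcongr with j
        exact ciInf_le (Set.finite_range _).bddBelow j

lemma sSup_numericalRange : sSup (numericalRange A) = ⨆ i, hA.eigenvalues i := by
  cases isEmpty_or_nonempty ι
  · simp [numericalRange_of_isEmpty]
  · exact hA.isGreatest_numericalRange.csSup_eq

lemma sInf_numericalRange : sInf (numericalRange A) = ⨅ i, hA.eigenvalues i := by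
  cases isEmpty_or_nonempty ι
  · simp [numericalRange_of_isEmpty]
  · exact hA.isLeast_numericalRange.csInf_eq

end IsHermitian

end Matrix

variable {n : ℕ}

lemma lambdaMax_eq_sSup (A : SymSpace n) :
    lambdaMax A = sSup (numericalRange (A : Matrix (Fin n) (Fin n) ℝ)) :=
  (IsHermitian.sSup_numericalRange A.2).symm

lemma lambdaMin_eq_sInf (A : SymSpace n) :
    lambdaMin A = sInf (numericalRange (A : Matrix (Fin n) (Fin n) ℝ)) :=
  (IsHermitian.sInf_numericalRange A.2).symm

lemma continuous_lambdaMax : Continuous (lambdaMax : SymSpace n → ℝ) := by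
  simp_rw [funext lambdaMax_eq_sSup]
  exact (isCompact_sphere 0 1).continuous_sSup <|
    continuous_inner_toEuclideanLin_self.comp (continuous_subtype_val.prodMap continuous_id)

lemma continuous_lambdaMin : Continuous (lambdaMin : SymSpace n → ℝ) := by
  simp_rw [funext lambdaMin_eq_sInf]
  exact (isCompact_sphere 0 1).continuous_sInf <|
    continuous_inner_toEuclideanLin_self.comp (continuous_subtype_val.prodMap continuous_id)

lemma lambdaMax_le_lambdaMax_add (A : SymSpace n) {Q : SymSpace n} (hQ : Q ∈ PSDcone n) :
    lambdaMax A ≤ lambdaMax (A + Q) := by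
  simp only [lambdaMax_eq_sSup]
  exact csSup_image_le_csSup_image (isCompact_numericalRange _).bddAbove
    fun x _ => inner_toEuclideanLin_self_le_add _ hQ x

lemma lambdaMin_le_lambdaMin_add (A : SymSpace n) {Q : SymSpace n} (hQ : Q ∈ PSDcone n) :
    lambdaMin A ≤ lambdaMin (A + Q) := by
  simp only [lambdaMin_eq_sInf]
  exact csInf_image_le_csInf_image (isCompact_numericalRange _).bddBelow
    fun x _ => inner_toEuclideanLin_self_le_add _ hQ x

lemma lambdaMax_eq_of_conj {A B : SymSpace n} {Q : Matrix (Fin n) (Fin n) ℝ} (hQ : Qᵀ * Q = 1)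
    (hB : (B : Matrix (Fin n) (Fin n) ℝ) = Qᵀ * (A : Matrix (Fin n) (Fin n) ℝ) * Q) :
    lambdaMax B = lambdaMax A := by
  rw [lambdaMax_eq_sSup, lambdaMax_eq_sSup, hB, numericalRange_transpose_mul_mul hQ]

lemma lambdaMin_eq_of_conj {A B : SymSpace n} {Q : Matrix (Fin n) (Fin n) ℝ} (hQ : Qᵀ * Q = 1)
    (hB : (B : Matrix (Fin n) (Fin n) ℝ) = Qᵀ * (A : Matrix (Fin n) (Fin n) ℝ) * Q) :
    lambdaMin B = lambdaMin A := by
  rw [lambdaMin_eq_sInf, lambdaMin_eq_sInf, hB, numericalRange_transpose_mul_mul hQ]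

lemma lambdaMax_nonpos_of_neg_mem_PSDcone {A : SymSpace n} (hA : -A ∈ PSDcone n) :
    lambdaMax A ≤ 0 := by
  rw [lambdaMax_eq_sSup]
  refine Real.sSup_nonpos fun _ ⟨x, _, hx⟩ => hx ▸ ?_
  have hAx := (isPositive_toEuclideanLin_iff.2 hA).re_inner_nonneg_right x
  simpa [inner_neg_right] using hAx

lemma eq_zero_of_lambdaMax_nonpos_of_lambdaMin_nonneg {A : SymSpace n} (hmax : lambdaMax A ≤ 0)
    (hmin : 0 ≤ lambdaMin A) : A = 0 := by
  refine Subtype.ext <| (IsHermitian.eigenvalues_eq_zero_iff A.2).1 <| funext fun i =>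
    le_antisymm ?_ ?_
  · exact (le_ciSup (Set.finite_range (symEigs A)).bddAbove i).trans hmax
  · exact hmin.trans (ciInf_le (Set.finite_range (symEigs A)).bddBelow i)

lemma symEigs_zero : symEigs (0 : SymSpace n) = 0 :=
  (IsHermitian.eigenvalues_eq_zero_iff _).2 rfl

lemma lambdaMax_zero : lambdaMax (0 : SymSpace n) = 0 := by
  simp [lambdaMax, symEigs_zero]

lemma lambdaMin_zero : lambdaMin (0 : SymSpace n) = 0 := by
  simp [lambdaMin, symEigs_zero]

lemma mem_FminMax_iff {f : ℝ → ℝ≥0∞} {A : SymSpace n} :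
    A ∈ FminMax n f ↔ 0 ≤ lambdaMax A ∧ ENNReal.ofReal (-lambdaMin A) ≤ f (lambdaMax A) :=
  and_congr_right' (EReal.zero_le_coe_add_coe_ennreal_iff _ _)

/-- For `f : [0,∞) → [0,∞]` upper semi-continuous, increasing, with `f(0) = 0`, the set
`F_f^{min/max}` is closed, satisfies positivity, is orthogonally invariant, and is borderline:
`F_f^{min/max} ∩ (−P) = {0}`. -/
theorem FminMax_borderline (n : ℕ) (f : ℝ → ℝ≥0∞)
    (husc : UpperSemicontinuousOn f (Set.Ici 0))
    (hmono : MonotoneOn f (Set.Ici 0)) (hf0 : f 0 = 0) :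
    IsClosed (FminMax n f) ∧
    FminMax n f + PSDcone n ⊆ FminMax n f ∧
    (∀ (A B : SymSpace n) (Q : Matrix (Fin n) (Fin n) ℝ), Qᵀ * Q = 1 →
      (B : Matrix (Fin n) (Fin n) ℝ) = Qᵀ * (A : Matrix (Fin n) (Fin n) ℝ) * Q →
        (A ∈ FminMax n f ↔ B ∈ FminMax n f)) ∧
    FminMax n f ∩ (-PSDcone n) = {0} := by
  refine ⟨?closed, ?positive, ?invariant, ?borderline⟩
  case closed =>
    have hypograph := (upperSemicontinuousOn_iff_isClosed_hypograph isClosed_Ici).1 husc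
    have hF : FminMax n f = (fun A => (lambdaMax A, ENNReal.ofReal (-lambdaMin A))) ⁻¹'
        {p | p.1 ∈ Set.Ici 0 ∧ p.2 ≤ f p.1} := Set.ext fun A => mem_FminMax_iff
    rw [hF]
    exact hypograph.preimage (continuous_lambdaMax.prodMk
      (ENNReal.continuous_ofReal.comp continuous_lambdaMin.neg))
  case positive =>
    rintro _ ⟨A, hA, Q, hQ, rfl⟩
    obtain ⟨hmax, hmin⟩ := mem_FminMax_iff.1 hA
    have hmax' := lambdaMax_le_lambdaMax_add A hQ
    have hmin' := lambdaMin_le_lambdaMin_add A hQ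
    refine mem_FminMax_iff.2 ⟨hmax.trans hmax', ?_⟩
    calc ENNReal.ofReal (-lambdaMin (A + Q)) ≤ ENNReal.ofReal (-lambdaMin A) :=
          ENNReal.ofReal_le_ofReal (neg_le_neg hmin')
      _ ≤ f (lambdaMax A) := hmin
      _ ≤ f (lambdaMax (A + Q)) := hmono hmax (hmax.trans hmax') hmax'
  case invariant =>
    intro A B Q hQ hB
    rw [mem_FminMax_iff, mem_FminMax_iff, lambdaMax_eq_of_conj hQ hB, lambdaMin_eq_of_conj hQ hB]
  case borderline =>
    refine Set.eq_singleton_iff_unique_mem.2 ⟨⟨?_, ?_⟩, fun A ⟨hA, hneg⟩ => ?_⟩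
    · simp [mem_FminMax_iff, lambdaMax_zero, lambdaMin_zero]
    · simpa [PSDcone] using PosSemidef.zero
    · obtain ⟨hmax, hmin⟩ := mem_FminMax_iff.1 hA
      have hmax0 := le_antisymm (lambdaMax_nonpos_of_neg_mem_PSDcone hneg) hmax
      rw [hmax0, hf0, nonpos_iff_eq_zero, ENNReal.ofReal_eq_zero, neg_nonpos] at hmin
      exact eq_zero_of_lambdaMax_nonpos_of_lambdaMin_nonneg hmax0.le hmin
end
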